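/- arXiv:2207.07980 — 4 statements merged into one kernel-verified Lean document; each statement's English description precedes it below -/
import Mathlib

section
/- Fix d ≥ 1. For measurable symmetric functions W₁, W₂ : [0,1]^{d+1} → [0,1], the supremum over pairwise disjoint Borel sets S₁,...,S_{d+1} ⊆ [0,1] of |∫_{S₁×···×S_{d+1}} (W₁(x) − W₂(x)) dx| is at least (d+1)^{−(d+1)} times the cut-norm distance d_{□,d}(W₁,W₂) = sup over arbitrary Borel sets S₁,...,S_{d+1} of |∫_{S₁×···×S_{d+1}} (W₁(x) − W₂(x)) dx|. -/
open MeasureTheory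

noncomputable section

/-- The uniform (Lebesgue) measure on `[0,1]`. -/
def unifI : Measure ℝ := volume.restrict (Set.Icc (0:ℝ) 1)

/-- The product uniform measure on tuples indexed by `ι`. -/
def piUnif (ι : Type*) [Fintype ι] : Measure (ι → ℝ) := Measure.pi fun _ => unifI

/-- A complexon, encoded as a function on finite multisets of points of `[0,1]`
(the multiset encoding makes total symmetry automatic), with values in `[0,1]`,
equal to `1` on the empty multiset and on singletons, and measurable in each
dimension. -/
structure Complexon where
  toFun : Multiset ℝ → ℝ
  mem_Icc : ∀ m, toFun m ∈ Set.Icc (0:ℝ) 1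
  empty_eq_one : toFun 0 = 1
  single_eq_one : ∀ x : ℝ, toFun {x} = 1
  measurable : ∀ d : ℕ, Measurable fun v : Fin (d+1) → ℝ =>
    toFun (Multiset.map v Finset.univ.val)

/-- The multiset of coordinates of a tuple. -/
def mTup {ι : Type*} [Fintype ι] (v : ι → ℝ) : Multiset ℝ :=
  Multiset.map v Finset.univ.val

/-- The faceted version `Ŵ` of a complexon-like function:
`Ŵ(x₁,…,x_{d+1}) = ∏_{∅ ≠ σ ⊆ [d+1]} W(x_σ)`. -/
def facetFun (W : Multiset ℝ → ℝ) : Multiset ℝ → ℝ :=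
  fun m => ((m.powerset.filter (· ≠ 0)).map W).prod

/-- An abstract simplicial complex on a vertex type `V`: a finite family of
finite nonempty subsets of `V` closed under taking nonempty subsets. -/
structure SComplex (V : Type*) [DecidableEq V] where
  faces : Finset (Finset V)
  nonempty_mem : ∀ σ ∈ faces, σ.Nonempty
  down_closed : ∀ σ ∈ faces, ∀ τ ⊆ σ, τ.Nonempty → τ ∈ faces

variable {V : Type*} [DecidableEq V] [Fintype V]

/-- Facets: the inclusion-maximal faces. -/
def SComplex.facets (F : SComplex V) : Finset (Finset V) :=
  F.faces.filter fun σ => ∀ τ ∈ F.faces, σ ⊆ τ → σ = τ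

/-- Antifacets: the inclusion-minimal nonempty non-faces. -/
def SComplex.antifacets (F : SComplex V) : Finset (Finset V) :=
  Finset.univ.filter fun τ =>
    τ.Nonempty ∧ τ ∉ F.faces ∧ ∀ τ' ⊂ τ, τ'.Nonempty → τ' ∈ F.faces

/-- Homomorphism-density-type integral of a family of faces in a
multiset function. -/
def homDensityOn (A : Finset (Finset V)) (W : Multiset ℝ → ℝ) : ℝ :=
  ∫ x : V → ℝ, ∏ σ ∈ A, W (σ.val.map x) ∂(piUnif V)

/-- Homomorphism density `t(F, W)`. -/
def homDensity (F : SComplex V) (W : Multiset ℝ → ℝ) : ℝ := homDensityOn F.faces W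

/-- Induced homomorphism density `t_ind(F, W)`. -/
def indDensity (F : SComplex V) (W : Multiset ℝ → ℝ) : ℝ :=
  ∫ x : V → ℝ,
    (∏ σ ∈ F.faces, W (σ.val.map x)) *
    (∏ τ ∈ F.antifacets, (1 - W (τ.val.map x))) ∂(piUnif V)

/-- `d`-dimensional cut norm of a function on `(d+1)`-tuples. -/
def cutNormD (d : ℕ) (U : (Fin (d+1) → ℝ) → ℝ) : ℝ :=
  sSup { r | ∃ S : Fin (d+1) → Set ℝ, (∀ i, MeasurableSet (S i)) ∧
    r = |∫ x in Set.univ.pi S, U x ∂(piUnif (Fin (d+1)))| }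

/-- `d`-dimensional cut distance between two multiset functions. -/
def cutDistD (d : ℕ) (W₁ W₂ : Multiset ℝ → ℝ) : ℝ :=
  cutNormD d (fun v => W₁ (mTup v) - W₂ (mTup v))

/-- Labeled cut distance with weights `α` (`α j` weights dimension `j`, `j ≥ 1`). -/
def cutDist (α : ℕ → ℝ) (W₁ W₂ : Multiset ℝ → ℝ) : ℝ :=
  ∑' j : ℕ, α (j+1) * cutDistD (j+1) W₁ W₂

/-- Composition of a multiset function with a point transformation `φ`. -/
def compFun (W : Multiset ℝ → ℝ) (φ : ℝ → ℝ) : Multiset ℝ → ℝ :=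
  fun m => W (m.map φ)

/-- Unlabeled cut distance `δ_□(·,·;(α_j))`: infimum over measure-preserving
transformations of `[0,1]`. -/
def uCutDist (α : ℕ → ℝ) (W₁ W₂ : Multiset ℝ → ℝ) : ℝ :=
  sInf { r | ∃ φ : ℝ → ℝ, MeasurePreserving φ unifI unifI ∧
    r = cutDist α W₁ (compFun W₂ φ) }

/-!
Cut `[0,1]` into `K` intervals of length at most `1 / N` and colour them by a map `ω` from
intervals to `ι`. Keeping in `S i` only the points of colour `i` gives pairwise disjoint sets.
Summed over all colourings, a point of `∏ S i` whose coordinates lie in distinct intervals is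
counted `|ι| ^ (K - |ι|)` times out of `|ι| ^ K`, so the integral over such points is at most
`|ι| ^ |ι|` times the supremum over disjoint boxes. The other points have two coordinates in one
interval; they form a set of measure at most `|ι|² / N`, which vanishes as `N → ∞`.
-/

open Finset Function
open scoped ENNReal

instance : IsProbabilityMeasure unifI :=
  ⟨by simp [unifI]⟩

instance (ι : Type*) [Fintype ι] : IsProbabilityMeasure (piUnif ι) := by
  unfold piUnif; infer_instance

section Counting

variable {ι κ : Type*} [Fintype ι] [DecidableEq ι] [Fintype κ] [DecidableEq κ] {g : ι → κ}

theorem card_filter_forall_apply_eq_of_injective (hg : Injective g) :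
    #{ω : κ → ι | ∀ i, ω (g i) = i} =
      Fintype.card ι ^ (Fintype.card κ - Fintype.card ι) := by
  let T (c : κ) : Finset ι := if c ∈ univ.image g then ({i | g i = c} : Finset ι) else univ
  have hT : ({ω : κ → ι | ∀ i, ω (g i) = i} : Finset _) = Fintype.piFinset T := by
    ext ω
    simp only [mem_filter, mem_univ, true_and, Fintype.mem_piFinset, T]
    refine ⟨fun h c => ?_, fun h i => hg (by simpa using h (g i))⟩
    split_ifs with hc
    · obtain ⟨i, -, rfl⟩ := mem_image.mp hc
      simp [h i]
    · exact mem_univ _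
  have hfiber (c : κ) (hc : c ∈ univ.image g) : #{i | g i = c} = 1 := by
    obtain ⟨i, -, rfl⟩ := mem_image.mp hc
    simp [hg.eq_iff, filter_eq']
  rw [hT, Fintype.card_piFinset, prod_congr rfl fun c _ => apply_ite card _ _ _, prod_ite,
    prod_congr rfl fun c hc => hfiber c (mem_filter.mp hc).2]
  simp only [prod_const_one, one_mul, prod_const, card_univ, filter_not, filter_mem_eq_inter,
    univ_inter, card_sdiff, inter_univ, card_image_of_injective _ hg]

theorem card_filter_forall_apply_eq_of_not_injective (hg : ¬ Injective g) :
    #{ω : κ → ι | ∀ i, ω (g i) = i} = 0 := by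
  obtain ⟨i, j, hgij, hij⟩ := not_injective_iff.mp hg
  refine card_eq_zero.mpr (filter_eq_empty_iff.mpr fun ω _ h => hij ?_)
  rw [← h i, ← h j, hgij]

end Counting

section Coloring

variable {ι κ X : Type*} {cell : X → κ} {S : ι → Set X}

def colorRestrict (cell : X → κ) (ω : κ → ι) (S : ι → Set X) (i : ι) : Set X :=
  S i ∩ cell ⁻¹' (ω ⁻¹' {i})

theorem pairwise_disjoint_colorRestrict (ω : κ → ι) :
    Pairwise (Disjoint on colorRestrict cell ω S) :=
  fun _ _ hij => Set.disjoint_left.mpr fun _ hi hj => hij (hi.2.symm.trans hj.2)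

theorem univ_pi_colorRestrict (ω : κ → ι) :
    Set.univ.pi (colorRestrict cell ω S) =
      Set.univ.pi S ∩ {x | ∀ i, ω (cell (x i)) = i} := by
  ext x; simp [colorRestrict, forall_and]

variable [MeasurableSpace X] [MeasurableSpace κ] [MeasurableSingletonClass κ]

theorem measurableSet_setOf_comp [Finite ι] [Countable κ] (hcell : Measurable cell)
    (p : (ι → κ) → Prop) : MeasurableSet {x : ι → X | p (cell ∘ x)} :=
  (measurable_pi_lambda _ fun i => hcell.comp (measurable_pi_apply i))
    MeasurableSet.of_discrete

theorem measurableSet_colorRestrict [Countable κ] (hcell : Measurable cell) (ω : κ → ι)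
    (hS : ∀ i, MeasurableSet (S i)) (i : ι) : MeasurableSet (colorRestrict cell ω S i) :=
  (hS i).inter (hcell MeasurableSet.of_discrete)

variable [Fintype ι] [Fintype κ] [DecidableEq κ] {μ : Measure (ι → X)}
  {U : (ι → X) → ℝ}

theorem sum_setIntegral_pi_colorRestrict (hU : Integrable U μ) (hcell : Measurable cell) :
    ∑ ω : κ → ι, ∫ x in Set.univ.pi (colorRestrict cell ω S), U x ∂μ =
      (Fintype.card ι ^ (Fintype.card κ - Fintype.card ι) : ℕ) *
        ∫ x in Set.univ.pi S ∩ {x | Injective (cell ∘ x)}, U x ∂μ := by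
  classical
  let B (ω : κ → ι) : Set (ι → X) := {x | ∀ i, ω ((cell ∘ x) i) = i}
  have hB (ω : κ → ι) : MeasurableSet (B ω) :=
    measurableSet_setOf_comp hcell (fun f => ∀ i, ω (f i) = i)
  have hcount (x : ι → X) : ∑ ω : κ → ι, (B ω).indicator U x =
      (Fintype.card ι ^ (Fintype.card κ - Fintype.card ι) : ℕ) *
        {x | Injective (cell ∘ x)}.indicator U x := by
    simp only [B, Set.indicator_apply, Set.mem_ofPred_eq, sum_ite, sum_const_zero, add_zero,
      sum_const, nsmul_eq_mul]
    by_cases hx : Injective (cell ∘ x)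
    · rw [card_filter_forall_apply_eq_of_injective hx]
      simp [hx]
    · rw [card_filter_forall_apply_eq_of_not_injective hx]
      simp [hx]
  calc _ = ∑ ω : κ → ι, ∫ x in Set.univ.pi S, (B ω).indicator U x ∂μ := by
        refine sum_congr rfl fun ω _ => ?_
        rw [univ_pi_colorRestrict, setIntegral_indicator (hB ω)]
        rfl
    _ = ∫ x in Set.univ.pi S, ∑ ω : κ → ι, (B ω).indicator U x ∂μ :=
        (integral_finsetSum _ fun ω _ => (hU.indicator (hB ω)).integrableOn).symm
    _ = _ := by
        simp_rw [hcount, integral_const_mul,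
          setIntegral_indicator (measurableSet_setOf_comp hcell Injective)]

theorem abs_setIntegral_pi_inter_injective_le [Nonempty ι] {M : ℝ}
    (hκ : Fintype.card ι ≤ Fintype.card κ) (hU : Integrable U μ) (hcell : Measurable cell)
    (hS : ∀ i, MeasurableSet (S i))
    (hM : ∀ T : ι → Set X, (∀ i, MeasurableSet (T i)) → Pairwise (Disjoint on T) →
      |∫ x in Set.univ.pi T, U x ∂μ| ≤ M) :
    |∫ x in Set.univ.pi S ∩ {x | Injective (cell ∘ x)}, U x ∂μ| ≤
      Fintype.card ι ^ Fintype.card ι * M := by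
  set n : ℝ := (Fintype.card ι : ℝ)
  have key : n ^ (Fintype.card κ - Fintype.card ι) *
      |∫ x in Set.univ.pi S ∩ {x | Injective (cell ∘ x)}, U x ∂μ| ≤
      n ^ (Fintype.card κ - Fintype.card ι) * (n ^ Fintype.card ι * M) := by
    calc _ = |∑ ω : κ → ι, ∫ x in Set.univ.pi (colorRestrict cell ω S), U x ∂μ| := by
          rw [sum_setIntegral_pi_colorRestrict hU hcell, abs_mul, Nat.cast_pow, abs_pow,
            Nat.abs_cast]
      _ ≤ ∑ ω : κ → ι, M := (abs_sum_le_sum_abs _ _).trans <| sum_le_sum fun ω _ =>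
          hM _ (measurableSet_colorRestrict hcell ω hS) (pairwise_disjoint_colorRestrict ω)
      _ = _ := by
          rw [sum_const, card_univ, Fintype.card_fun, nsmul_eq_mul, ← mul_assoc, ← pow_add,
            Nat.sub_add_cancel hκ]
          push_cast; ring
  exact le_of_mul_le_mul_left key (by positivity)

theorem abs_setIntegral_pi_le_of_forall_disjoint [IsFiniteMeasure μ] [Nonempty ι] {M C : ℝ}
    (hκ : Fintype.card ι ≤ Fintype.card κ) (hU : Measurable U) (hC : ∀ x, |U x| ≤ C)
    (hcell : Measurable cell) (hS : ∀ i, MeasurableSet (S i))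
    (hM : ∀ T : ι → Set X, (∀ i, MeasurableSet (T i)) → Pairwise (Disjoint on T) →
      |∫ x in Set.univ.pi T, U x ∂μ| ≤ M) :
    |∫ x in Set.univ.pi S, U x ∂μ| ≤ Fintype.card ι ^ Fintype.card ι * M +
      C * μ.real (Set.univ.pi S \ {x | Injective (cell ∘ x)}) := by
  have hC' (x) : ‖U x‖ ≤ C := (Real.norm_eq_abs _).trans_le (hC x)
  have hUi : Integrable U μ := .of_bound hU.aestronglyMeasurable C (.of_forall hC')
  rw [← integral_inter_add_sdiff (measurableSet_setOf_comp hcell Injective) hUi.integrableOn]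
  refine (abs_add_le _ _).trans (add_le_add
    (abs_setIntegral_pi_inter_injective_le hκ hUi hcell hS hM) ?_)
  rw [← Real.norm_eq_abs]
  exact norm_setIntegral_le_of_norm_le_const (measure_lt_top _ _) fun x _ => hC' x

end Coloring

section Collisions

variable {ι κ X : Type*} [Fintype ι] [MeasurableSpace X] [MeasurableSpace κ]
  [MeasurableSingletonClass κ] [Countable κ] {cell : X → κ} {ν : Measure X}
  [IsProbabilityMeasure ν] {δ : ℝ≥0∞}

theorem pi_measure_setOf_apply_eq_le (hcell : Measurable cell)
    (hδ : ∀ k, ν (cell ⁻¹' {k}) ≤ δ) {i j : ι} (hij : i ≠ j) :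
    Measure.pi (fun _ => ν) {x | cell (x i) = cell (x j)} ≤ δ := by
  have hD : MeasurableSet {q : X × X | cell q.1 = cell q.2} :=
    ((hcell.comp measurable_fst).prodMk (hcell.comp measurable_snd))
      (MeasurableSet.of_discrete (s := {q : κ × κ | q.1 = q.2}))
  have hp : Measurable fun x : ι → X => (x i, x j) :=
    (measurable_pi_apply i).prodMk (measurable_pi_apply j)
  have hmap : (Measure.pi fun _ => ν).map (fun x : ι → X => (x i, x j)) = ν.prod ν := by
    have hind := (ProbabilityTheory.iIndepFun_pi (μ := fun _ : ι => ν) (X := fun _ => id)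
      fun _ => aemeasurable_id).indepFun hij
    rw [hind.map_prod_eq_prod_map_map (measurable_pi_apply i).aemeasurable
      (measurable_pi_apply j).aemeasurable, (measurePreserving_eval _ i).map_eq,
      (measurePreserving_eval _ j).map_eq]
  calc Measure.pi (fun _ => ν) {x | cell (x i) = cell (x j)}
      = ν.prod ν {q | cell q.1 = cell q.2} := by
        rw [← hmap, Measure.map_apply hp hD]; rfl
    _ = ∫⁻ y, ν (cell ⁻¹' {cell y}) ∂ν := by
        rw [Measure.prod_apply hD]
        simp_rw [Set.preimage, Set.mem_singleton_iff, eq_comm]; rfl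
    _ ≤ ∫⁻ _, δ ∂ν := lintegral_mono fun y => hδ (cell y)
    _ = δ := by simp

theorem pi_measure_setOf_not_injective_le (hcell : Measurable cell)
    (hδ : ∀ k, ν (cell ⁻¹' {k}) ≤ δ) :
    Measure.pi (fun _ : ι => ν) {x | ¬ Injective (cell ∘ x)} ≤ Fintype.card ι ^ 2 * δ := by
  classical
  have hsub : {x : ι → X | ¬ Injective (cell ∘ x)} ⊆
      ⋃ p ∈ (univ : Finset ι).offDiag, {x | cell (x p.1) = cell (x p.2)} := by
    intro x hx
    obtain ⟨i, j, hcij, hij⟩ := not_injective_iff.mp hx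
    exact Set.mem_biUnion (x := (i, j)) (mem_offDiag.mpr ⟨mem_univ i, mem_univ j, hij⟩) hcij
  calc _ ≤ ∑ p ∈ (univ : Finset ι).offDiag,
        Measure.pi (fun _ : ι => ν) {x | cell (x p.1) = cell (x p.2)} :=
        (measure_mono hsub).trans (measure_biUnion_finset_le _ _)
    _ ≤ ∑ p ∈ (univ : Finset ι).offDiag, δ :=
        sum_le_sum fun p hp => pi_measure_setOf_apply_eq_le hcell hδ (mem_offDiag.mp hp).2.2
    _ ≤ _ := by
        rw [sum_const, nsmul_eq_mul, offDiag_card, card_univ, sq]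
        gcongr
        exact_mod_cast Nat.sub_le _ _

end Collisions

def gridCell (N : ℕ) (x : ℝ) : Fin (N + 1) := Fin.clamp ⌊x * N⌋₊ N

theorem measurable_gridCell (N : ℕ) : Measurable (gridCell N) :=
  (measurable_from_nat (f := fun n => Fin.clamp n N)).comp
    (Nat.measurable_floor.comp (measurable_id.mul_const _))

theorem unifI_gridCell_preimage_le {N : ℕ} (hN : 0 < N) (k : Fin (N + 1)) :
    unifI (gridCell N ⁻¹' {k}) ≤ (N : ℝ≥0∞)⁻¹ := by
  have hN' : (0 : ℝ) < N := by exact_mod_cast hN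
  have hsub : gridCell N ⁻¹' {k} ∩ Set.Icc 0 1 ⊆ Set.Icc ((k : ℝ) / N) ((k + 1) / N) := by
    rintro x ⟨hk, hx0, hx1⟩
    have hfloor : ⌊x * N⌋₊ = k := by
      have hle : ⌊x * N⌋₊ ≤ N := Nat.floor_le_of_le (by nlinarith)
      simpa [gridCell, Fin.ext_iff, Fin.coe_clamp, min_eq_left hle] using hk
    rw [Set.mem_Icc, div_le_iff₀ hN', le_div_iff₀ hN', ← hfloor]
    exact ⟨Nat.floor_le (by positivity), (Nat.lt_floor_add_one _).le⟩
  calc unifI (gridCell N ⁻¹' {k}) = volume (gridCell N ⁻¹' {k} ∩ Set.Icc 0 1) :=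
        Measure.restrict_apply (measurable_gridCell N (.singleton k))
    _ ≤ volume (Set.Icc ((k : ℝ) / N) ((k + 1) / N)) := measure_mono hsub
    _ = (N : ℝ≥0∞)⁻¹ := by
        rw [Real.volume_Icc, ← sub_div, add_sub_cancel_left, one_div,
          ENNReal.ofReal_inv_of_pos hN', ENNReal.ofReal_natCast]

theorem piUnif_real_setOf_not_injective_gridCell_le (ι : Type*) [Fintype ι]
    {N : ℕ} (hN : 0 < N) :
    (piUnif ι).real {x | ¬ Injective (gridCell N ∘ x)} ≤ Fintype.card ι ^ 2 / N := by
  have h := pi_measure_setOf_not_injective_le (ι := ι) (measurable_gridCell N)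
    (unifI_gridCell_preimage_le hN)
  rw [← piUnif] at h
  refine (ENNReal.toReal_mono (by simp [ENNReal.mul_eq_top, hN.ne']) h).trans_eq ?_
  simp [div_eq_mul_inv]

theorem abs_setIntegral_piUnif_le_of_forall_disjoint {ι : Type*} [Fintype ι] [Nonempty ι]
    {U : (ι → ℝ) → ℝ} {C M : ℝ} (hU : Measurable U) (hC : ∀ x, |U x| ≤ C)
    (hM : ∀ T : ι → Set ℝ, (∀ i, MeasurableSet (T i)) → Pairwise (Disjoint on T) →
      |∫ x in Set.univ.pi T, U x ∂piUnif ι| ≤ M)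
    {S : ι → Set ℝ} (hS : ∀ i, MeasurableSet (S i)) :
    |∫ x in Set.univ.pi S, U x ∂piUnif ι| ≤ Fintype.card ι ^ Fintype.card ι * M := by
  set n := Fintype.card ι
  have hC0 : 0 ≤ C := (abs_nonneg _).trans (hC 0)
  refine le_of_forall_pos_lt_add fun ε hε => ?_
  obtain ⟨N, hN⟩ := exists_nat_gt (max (n : ℝ) (C * n ^ 2 / ε))
  have hnN : n < N := by exact_mod_cast (le_max_left _ _).trans_lt hN
  have hN0 : (0 : ℝ) < N := by exact_mod_cast (Nat.zero_le n).trans_lt hnN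
  calc |∫ x in Set.univ.pi S, U x ∂piUnif ι|
      ≤ n ^ n * M + C * (piUnif ι).real (Set.univ.pi S \ {x | Injective (gridCell N ∘ x)}) :=
        abs_setIntegral_pi_le_of_forall_disjoint (by simp; omega) hU hC (measurable_gridCell N)
          hS hM
    _ ≤ n ^ n * M + C * (n ^ 2 / N) := by
        gcongr
        exact (measureReal_mono fun x hx => hx.2).trans
          (piUnif_real_setOf_not_injective_gridCell_le ι (by exact_mod_cast hN0))
    _ < n ^ n * M + ε := by
        gcongr
        rw [← mul_div_assoc, div_lt_iff₀ hN0, mul_comm ε, ← div_lt_iff₀ hε]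
        exact (le_max_right _ _).trans_lt hN

theorem disjoint_sup_ge_cutNorm_general (d : ℕ)
    (W₁ W₂ : (Fin (d + 1) → ℝ) → ℝ)
    (hm₁ : Measurable W₁) (hm₂ : Measurable W₂)
    (hb₁ : ∀ x, W₁ x ∈ Set.Icc (0:ℝ) 1) (hb₂ : ∀ x, W₂ x ∈ Set.Icc (0:ℝ) 1) :
    (1 / ((d : ℝ) + 1) ^ (d + 1)) * cutNormD d (fun v => W₁ v - W₂ v) ≤
      sSup { r | ∃ S : Fin (d + 1) → Set ℝ, (∀ i, MeasurableSet (S i)) ∧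
        (∀ i j, i ≠ j → Disjoint (S i) (S j)) ∧
        r = |∫ x in Set.univ.pi S, (W₁ x - W₂ x) ∂(piUnif (Fin (d + 1)))| } := by
  set R := { r | ∃ S : Fin (d + 1) → Set ℝ, (∀ i, MeasurableSet (S i)) ∧
    (∀ i j, i ≠ j → Disjoint (S i) (S j)) ∧
    r = |∫ x in Set.univ.pi S, (W₁ x - W₂ x) ∂(piUnif (Fin (d + 1)))| }
  have hU1 (x) : |W₁ x - W₂ x| ≤ 1 := abs_sub_le_iff.mpr
    ⟨by linarith [(hb₁ x).2, (hb₂ x).1], by linarith [(hb₁ x).1, (hb₂ x).2]⟩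
  have hR : BddAbove R := by
    refine ⟨1, ?_⟩
    rintro _ ⟨S, -, -, rfl⟩
    rw [← Real.norm_eq_abs]
    refine (norm_setIntegral_le_of_norm_le_const (measure_lt_top _ _)
      fun x _ => (Real.norm_eq_abs _).trans_le (hU1 x)).trans ?_
    rw [one_mul]
    exact measureReal_le_one
  have hcut : cutNormD d (fun v => W₁ v - W₂ v) ≤ ((d : ℝ) + 1) ^ (d + 1) * sSup R := by
    refine csSup_le ⟨_, fun _ => ∅, fun _ => .empty, rfl⟩ ?_
    rintro _ ⟨S, hS, rfl⟩
    simpa using abs_setIntegral_piUnif_le_of_forall_disjoint (hm₁.sub hm₂) hU1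
      (fun T hT hdisj => le_csSup hR ⟨T, hT, fun i j hij => hdisj hij, rfl⟩) hS
  rw [one_div, inv_mul_le_iff₀ (by positivity)]
  exact hcut

/-- Restricting the cut-norm supremum to pairwise disjoint
Borel sets loses at most a factor `(d+1)^{d+1}`. -/
theorem disjoint_sup_ge_cutNorm (d : ℕ) (hd : 1 ≤ d)
    (W₁ W₂ : (Fin (d + 1) → ℝ) → ℝ)
    (hm₁ : Measurable W₁) (hm₂ : Measurable W₂)
    (hb₁ : ∀ x, W₁ x ∈ Set.Icc (0:ℝ) 1) (hb₂ : ∀ x, W₂ x ∈ Set.Icc (0:ℝ) 1)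
    (hs₁ : ∀ (e : Equiv.Perm (Fin (d + 1))) (v : Fin (d + 1) → ℝ), W₁ (v ∘ e) = W₁ v)
    (hs₂ : ∀ (e : Equiv.Perm (Fin (d + 1))) (v : Fin (d + 1) → ℝ), W₂ (v ∘ e) = W₂ v) :
    (1 / ((d : ℝ) + 1) ^ (d + 1)) * cutNormD d (fun v => W₁ v - W₂ v) ≤
      sSup { r | ∃ S : Fin (d + 1) → Set ℝ, (∀ i, MeasurableSet (S i)) ∧
        (∀ i j, i ≠ j → Disjoint (S i) (S j)) ∧
        r = |∫ x in Set.univ.pi S, (W₁ x - W₂ x) ∂(piUnif (Fin (d + 1)))| } :=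
  disjoint_sup_ge_cutNorm_general d W₁ W₂ hm₁ hm₂ hb₁ hb₂
end
end

section
/- One-coordinate cut-norm bound (Alon–Fernandez de la Vega–Kannan–Karpinski type, special case): let B : [n]^{d+1} → [−1,1], let S₁,...,S_{d+1} ⊆ [n], fix j ∈ [d+1], and let Q_j be a uniformly random q-subset of [n]^{[d+1]∖{j}}. Then B(S₁,...,S_{d+1}) ≤ E_{Q_j}[B(S₁,...,S_{j−1}, (Q_j ∩ ∏_{i≠j}S_i)^+, S_{j+1},...,S_{d+1})] + n^{d+1}/√q, where for a set R ⊆ [n]^{[d+1]∖{j}}, R^+ = {v ∈ [n] : Σ_{q∈R} B(q₁,...,q_{j−1},v,q_{j+1},...,q_{d+1}) > 0}, and B(T₁,...,T_{d+1}) = Σ_{v₁∈T₁}···Σ_{v_{d+1}∈T_{d+1}} B(v₁,...,v_{d+1}). -/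
open MeasureTheory

noncomputable section

/-- Insert the value `v` at coordinate `j` of a partial tuple `g` defined on the
remaining coordinates. -/
def insertAt {n d : ℕ} (j : Fin (d + 1)) (v : Fin n)
    (g : {i : Fin (d + 1) // i ≠ j} → Fin n) : Fin (d + 1) → Fin n :=
  fun i => if h : i = j then v else g ⟨i, h⟩

open Classical in
/-- The positive-majority set `R⁺` determined by a set `R` of partial tuples. -/
def plusSet {n d : ℕ} (B : (Fin (d + 1) → Fin n) → ℝ) (j : Fin (d + 1))
    (R : Finset ({i : Fin (d + 1) // i ≠ j} → Fin n)) : Finset (Fin n) :=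
  Finset.univ.filter fun v => 0 < ∑ g ∈ R, B (insertAt j v g)

/-- `B(T₁,…,T_{d+1})`: the sum of the tensor over a box. -/
def boxSum {n d : ℕ} (B : (Fin (d + 1) → Fin n) → ℝ)
    (S : Fin (d + 1) → Finset (Fin n)) : ℝ :=
  ∑ v ∈ Fintype.piFinset S, B v

open Classical in
/-- The family of `q`-subsets of the partial tuples missing coordinate `j`. -/
def qSubsets (n d q : ℕ) (j : Fin (d + 1)) :
    Finset (Finset ({i : Fin (d + 1) // i ≠ j} → Fin n)) :=
  Finset.univ.filter fun Q => Q.card = q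


section AuxAFKK
open Finset

-- counting lemma
lemma count_superset {α : Type*} [DecidableEq α] (u s : Finset α) (hs : s ⊆ u) (q : ℕ)
    (hq : s.card ≤ q) :
    ((u.powersetCard q).filter (fun Q => s ⊆ Q)).card = (u.card - s.card).choose (q - s.card) := by
  have key : ((u.powersetCard q).filter (fun Q => s ⊆ Q)).card
      = ((u \ s).powersetCard (q - s.card)).card := by
    apply Finset.card_bij' (fun Q _ => Q \ s) (fun R _ => R ∪ s)
    · intro Q hQ
      simp only [mem_filter, mem_powersetCard] at hQ ⊢
      obtain ⟨⟨hQu, hQc⟩, hsQ⟩ := hQ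
      constructor
      · intro x hx
        simp only [mem_sdiff] at hx ⊢
        exact ⟨hQu hx.1, hx.2⟩
      · rw [card_sdiff_of_subset hsQ, hQc]
    · intro R hR
      simp only [mem_filter, mem_powersetCard] at hR ⊢
      obtain ⟨hRu, hRc⟩ := hR
      have hdisj : Disjoint R s := by
        refine disjoint_left.2 fun x hx hxs => ?_
        exact (mem_sdiff.1 (hRu hx)).2 hxs
      refine ⟨⟨?_, ?_⟩, subset_union_right⟩
      · exact union_subset (hRu.trans (sdiff_subset)) hs
      · rw [card_union_of_disjoint hdisj, hRc, Nat.sub_add_cancel hq]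
    · intro Q hQ
      simp only [mem_filter] at hQ
      exact sdiff_union_of_subset hQ.2
    · intro R hR
      simp only [mem_powersetCard] at hR
      have hdisj : Disjoint R s := by
        refine disjoint_left.2 fun x hx hxs => ?_
        exact (mem_sdiff.1 (hR.1 hx)).2 hxs
      rw [union_sdiff_distrib, sdiff_self]; simpa using sdiff_eq_self_of_disjoint hdisj
  rw [key, card_powersetCard, card_sdiff_of_subset hs]

lemma count_superset_zero {α : Type*} [DecidableEq α] (u s : Finset α) (q : ℕ)
    (hq : q < s.card) :
    ((u.powersetCard q).filter (fun Q => s ⊆ Q)).card = 0 := by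
  rw [card_eq_zero, filter_eq_empty_iff]
  intro Q hQ hsQ
  rw [mem_powersetCard] at hQ
  exact absurd (card_le_card hsQ) (by omega)

-- nat identity I1
lemma nat_id1 {N q : ℕ} (hq : 1 ≤ q) (hqN : q ≤ N) :
    q * N.choose q = N * (N - 1).choose (q - 1) := by
  obtain ⟨m, rfl⟩ : ∃ m, N = m + 1 := ⟨N - 1, by omega⟩
  obtain ⟨r, rfl⟩ : ∃ r, q = r + 1 := ⟨q - 1, by omega⟩
  simpa [mul_comm] using (Nat.add_one_mul_choose_eq m r).symm

-- nat identity I2 : N^2 * D ≤ q^2 * M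
lemma nat_id2 {N q : ℕ} (hq : 2 ≤ q) (hqN : q ≤ N) :
    N * (N - 1) * (N - 2).choose (q - 2) = q * (q - 1) * N.choose q := by
  have h1 : q * N.choose q = N * (N - 1).choose (q - 1) := nat_id1 (by omega) hqN
  have h2 : (q - 1) * (N - 1).choose (q - 1) = (N - 1) * (N - 1 - 1).choose (q - 1 - 1) :=
    nat_id1 (by omega) (by omega)
  have h3 : N - 1 - 1 = N - 2 := by omega
  have h4 : q - 1 - 1 = q - 2 := by omega
  rw [h3, h4] at h2
  calc N * (N - 1) * (N - 2).choose (q - 2) = N * ((N - 1) * (N - 2).choose (q - 2)) := by ring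
    _ = N * ((q - 1) * (N - 1).choose (q - 1)) := by rw [h2]
    _ = (q - 1) * (N * (N - 1).choose (q - 1)) := by ring
    _ = (q - 1) * (q * N.choose q) := by rw [h1]
    _ = q * (q - 1) * N.choose q := by ring

end AuxAFKK

section AuxAFKK2
open Finset
open Classical in
lemma boxSum_split {n d : ℕ} (B : (Fin (d + 1) → Fin n) → ℝ) (j : Fin (d + 1))
    (S : Fin (d + 1) → Finset (Fin n)) :
    boxSum B S = ∑ v ∈ S j, ∑ g ∈ Finset.univ.filter
        (fun g : {i : Fin (d + 1) // i ≠ j} → Fin n => ∀ i, g i ∈ S i.1),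
      B (insertAt j v g) := by
  classical
  rw [boxSum, ← Finset.sum_product']
  apply Finset.sum_bij' (fun w _ => ((w j, fun i => w i.1) :
      Fin n × ({i : Fin (d + 1) // i ≠ j} → Fin n)))
    (fun p _ => insertAt j p.1 p.2)
  · intro w hw
    rw [Fintype.mem_piFinset] at hw
    simp only [mem_product, mem_filter, mem_univ, true_and]
    exact ⟨hw j, fun i => hw i.1⟩
  · intro p hp
    simp only [mem_product, mem_filter, mem_univ, true_and] at hp
    rw [Fintype.mem_piFinset]
    intro i
    by_cases h : i = j
    · subst h; simpa [insertAt] using hp.1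
    · simpa [insertAt, h] using hp.2 ⟨i, h⟩
  · intro w hw
    funext i
    by_cases h : i = j
    · subst h; simp [insertAt]
    · simp [insertAt, h]
  · intro p hp
    ext
    · simp [insertAt]
    · rename_i i; simp [insertAt, i.2]
  · intro w hw
    congr 1
    funext i
    by_cases h : i = j
    · subst h; simp [insertAt]
    · simp [insertAt, h]

section moments

variable {α : Type*} [Fintype α] [DecidableEq α] (q : ℕ)

lemma count_mem (g : α) (hq : 1 ≤ q) :
    (((Finset.univ : Finset α).powersetCard q).filter (fun Q => g ∈ Q)).card
      = (Fintype.card α - 1).choose (q - 1) := by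
  have := count_superset (Finset.univ : Finset α) {g} (subset_univ _) q (by simpa using hq)
  simp only [card_singleton, singleton_subset_iff] at this
  rw [this, card_univ]

lemma count_pair {g g' : α} (hgg : g ≠ g') (hq : 1 ≤ q) :
    (((Finset.univ : Finset α).powersetCard q).filter (fun Q => g ∈ Q ∧ g' ∈ Q)).card
      = if 2 ≤ q then (Fintype.card α - 2).choose (q - 2) else 0 := by
  have hcard : ({g, g'} : Finset α).card = 2 := card_pair hgg
  have hsub : ∀ Q : Finset α, ({g, g'} : Finset α) ⊆ Q ↔ g ∈ Q ∧ g' ∈ Q := by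
    intro Q; simp [insert_subset_iff]
  by_cases h2 : 2 ≤ q
  · rw [if_pos h2]
    have := count_superset (Finset.univ : Finset α) {g, g'} (subset_univ _) q (by omega)
    rw [hcard, card_univ] at this
    rw [← this]
    congr 1
    apply filter_congr
    intro Q _
    simp [hsub Q]
  · rw [if_neg h2]
    have := count_superset_zero (Finset.univ : Finset α) {g, g'} q (by omega)
    rw [← this]
    congr 1
    apply filter_congr
    intro Q _
    simp [hsub Q]

-- first moment
lemma first_moment (a : α → ℝ) (hq : 1 ≤ q) :
    ∑ Q ∈ (Finset.univ : Finset α).powersetCard q, ∑ g ∈ Q, a g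
      = ((Fintype.card α - 1).choose (q - 1) : ℝ) * ∑ g, a g := by
  have step : ∀ Q ∈ (Finset.univ : Finset α).powersetCard q,
      ∑ g ∈ Q, a g = ∑ g : α, if g ∈ Q then a g else 0 := by
    intro Q _
    rw [Finset.sum_ite_mem, univ_inter]
  rw [Finset.sum_congr rfl step, Finset.sum_comm]
  rw [Finset.mul_sum]
  apply Finset.sum_congr rfl
  intro g _
  rw [← Finset.sum_filter, Finset.sum_const, count_mem q g hq, nsmul_eq_mul]

lemma second_moment (a : α → ℝ) (hq : 1 ≤ q) :
    ∑ Q ∈ (Finset.univ : Finset α).powersetCard q, (∑ g ∈ Q, a g) ^ 2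
      = ((Fintype.card α - 1).choose (q - 1) : ℝ) * (∑ g, (a g) ^ 2)
        + (if 2 ≤ q then ((Fintype.card α - 2).choose (q - 2) : ℝ) else 0)
          * ((∑ g, a g) ^ 2 - ∑ g, (a g) ^ 2) := by
  set A : ℝ := ((Fintype.card α - 1).choose (q - 1) : ℝ)
  set D : ℝ := (if 2 ≤ q then ((Fintype.card α - 2).choose (q - 2) : ℝ) else 0)
  set T : ℝ := ∑ g, a g
  have step : ∀ Q ∈ (Finset.univ : Finset α).powersetCard q,
      (∑ g ∈ Q, a g) ^ 2 = ∑ g : α, ∑ g' : α,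
        if g ∈ Q ∧ g' ∈ Q then a g * a g' else 0 := by
    intro Q _
    have h1 : ∑ g ∈ Q, a g = ∑ g : α, if g ∈ Q then a g else 0 := by
      rw [Finset.sum_ite_mem, univ_inter]
    rw [h1, sq, Finset.sum_mul_sum]
    apply Finset.sum_congr rfl; intro g _
    apply Finset.sum_congr rfl; intro g' _
    split_ifs with h1 h2 h3 <;> simp_all
  rw [Finset.sum_congr rfl step]
  rw [Finset.sum_comm]
  have inner : ∀ g : α, ∑ Q ∈ (Finset.univ : Finset α).powersetCard q,
      ∑ g' : α, (if g ∈ Q ∧ g' ∈ Q then a g * a g' else 0)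
      = A * (a g) ^ 2 + D * (a g * (T - a g)) := by
    intro g
    rw [Finset.sum_comm]
    have split : ∑ g' : α, ∑ Q ∈ (Finset.univ : Finset α).powersetCard q,
        (if g ∈ Q ∧ g' ∈ Q then a g * a g' else 0)
        = (∑ Q ∈ (Finset.univ : Finset α).powersetCard q,
            (if g ∈ Q ∧ g ∈ Q then a g * a g else 0))
          + ∑ g' ∈ Finset.univ.erase g, ∑ Q ∈ (Finset.univ : Finset α).powersetCard q,
            (if g ∈ Q ∧ g' ∈ Q then a g * a g' else 0) :=
      (Finset.add_sum_erase _ _ (mem_univ g)).symm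
    rw [split]
    have hdiag : ∑ Q ∈ (Finset.univ : Finset α).powersetCard q,
        (if g ∈ Q ∧ g ∈ Q then a g * a g else 0) = A * (a g) ^ 2 := by
      simp only [and_self]
      rw [← Finset.sum_filter, Finset.sum_const, count_mem q g hq, nsmul_eq_mul, sq]
    have hoff : ∀ g' ∈ Finset.univ.erase g,
        ∑ Q ∈ (Finset.univ : Finset α).powersetCard q,
          (if g ∈ Q ∧ g' ∈ Q then a g * a g' else 0) = D * (a g * a g') := by
      intro g' hg'
      have hne : g ≠ g' := fun h => (Finset.mem_erase.1 hg').1 h.symm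
      rw [← Finset.sum_filter, Finset.sum_const, count_pair q hne hq, nsmul_eq_mul]
      push_cast
      rfl
    rw [hdiag, Finset.sum_congr rfl hoff, ← Finset.mul_sum, ← Finset.mul_sum,
      Finset.sum_erase_eq_sub (mem_univ g)]
  have hsum : ∑ g : α, a g * (T - a g) = T ^ 2 - ∑ g, (a g) ^ 2 := by
    have he : ∀ g : α, a g * (T - a g) = a g * T - (a g) ^ 2 := fun g => by ring
    rw [Finset.sum_congr rfl (fun g _ => he g), Finset.sum_sub_distrib, ← Finset.sum_mul, sq]
  rw [Finset.sum_congr rfl (fun g _ => inner g), Finset.sum_add_distrib,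
    ← Finset.mul_sum, ← Finset.mul_sum, hsum]
end moments


section var
variable {α : Type*} [Fintype α] [DecidableEq α]

lemma variance_bound (q : ℕ) (hq : 1 ≤ q) (hqN : q ≤ Fintype.card α)
    (a : α → ℝ) (ha : ∀ g, |a g| ≤ 1) :
    ∑ Q ∈ (Finset.univ : Finset α).powersetCard q,
      ((Fintype.card α : ℝ) * (∑ g ∈ Q, a g) - q * ∑ g, a g) ^ 2
      ≤ (Fintype.card α : ℝ) ^ 2 * ((Fintype.card α).choose q) * q := by
  set N : ℕ := Fintype.card α with hN
  set M : ℝ := ((N.choose q : ℕ) : ℝ) with hM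
  set A : ℝ := (((N - 1).choose (q - 1) : ℕ) : ℝ) with hA
  set D : ℝ := (if 2 ≤ q then (((N - 2).choose (q - 2) : ℕ) : ℝ) else 0) with hD
  set T : ℝ := ∑ g, a g with hT
  set Sa2 : ℝ := ∑ g, (a g) ^ 2 with hSa2
  have hcard : (((Finset.univ : Finset α).powersetCard q).card : ℝ) = M := by
    rw [card_powersetCard, card_univ]
  have h1 : ∑ Q ∈ (Finset.univ : Finset α).powersetCard q, ∑ g ∈ Q, a g = A * T :=
    first_moment q a hq
  have h2 : ∑ Q ∈ (Finset.univ : Finset α).powersetCard q, (∑ g ∈ Q, a g) ^ 2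
      = A * Sa2 + D * (T ^ 2 - Sa2) := second_moment q a hq
  have expand : ∀ Q : Finset α, ((N : ℝ) * (∑ g ∈ Q, a g) - q * T) ^ 2
      = (N : ℝ) ^ 2 * (∑ g ∈ Q, a g) ^ 2 - 2 * N * q * T * (∑ g ∈ Q, a g) + q ^ 2 * T ^ 2 := by
    intro Q; ring
  rw [Finset.sum_congr rfl (fun Q _ => expand Q), Finset.sum_add_distrib,
    Finset.sum_sub_distrib, ← Finset.mul_sum, ← Finset.mul_sum, h1, h2,
    Finset.sum_const, nsmul_eq_mul, hcard]
  -- key facts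
  have hNA : (N : ℝ) * A = q * M := by
    have := nat_id1 hq hqN
    have := congrArg (fun x : ℕ => (x : ℝ)) this
    push_cast at this
    linarith
  have hD2 : (N : ℝ) ^ 2 * D ≤ q ^ 2 * M := by
    by_cases h2q : 2 ≤ q
    · rw [hD, if_pos h2q]
      have hnat : N ^ 2 * (N - 2).choose (q - 2) * (N - 1) ≤ q ^ 2 * N.choose q * (N - 1) := by
        have hid := nat_id2 h2q hqN
        have hineq : N * (q - 1) ≤ q * (N - 1) := by
          have h1'' : N * (q - 1) = N * q - N := by rw [Nat.mul_sub, Nat.mul_one]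
          have h2'' : q * (N - 1) = q * N - q := by rw [Nat.mul_sub, Nat.mul_one]
          rw [h1'', h2'', mul_comm N q]
          omega
        calc N ^ 2 * (N - 2).choose (q - 2) * (N - 1)
            = N * (N * (N - 1) * (N - 2).choose (q - 2)) := by ring
          _ = N * (q * (q - 1) * N.choose q) := by rw [hid]
          _ = (N * (q - 1)) * (q * N.choose q) := by ring
          _ ≤ (q * (N - 1)) * (q * N.choose q) := Nat.mul_le_mul_right _ hineq
          _ = q ^ 2 * N.choose q * (N - 1) := by ring
      have hN1 : 0 < N - 1 := by omega
      have hnat2 : N ^ 2 * (N - 2).choose (q - 2) ≤ q ^ 2 * N.choose q :=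
        Nat.le_of_mul_le_mul_right (by simpa [Nat.mul_comm] using hnat) hN1
      calc (N : ℝ) ^ 2 * ((N - 2).choose (q - 2) : ℕ) = ((N ^ 2 * (N - 2).choose (q - 2) : ℕ) : ℝ) := by
            push_cast; ring
        _ ≤ ((q ^ 2 * N.choose q : ℕ) : ℝ) := by exact_mod_cast hnat2
        _ = (q : ℝ) ^ 2 * M := by push_cast; ring
    · rw [hD, if_neg h2q]
      rw [mul_zero]
      positivity
  have hA0 : (0 : ℝ) ≤ A := Nat.cast_nonneg _
  have hD0 : (0 : ℝ) ≤ D := by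
    rw [hD]; split_ifs
    · exact Nat.cast_nonneg _
    · exact le_rfl
  have hSa20 : (0 : ℝ) ≤ Sa2 := Finset.sum_nonneg fun g _ => sq_nonneg _
  have hSa2N : Sa2 ≤ N := by
    calc Sa2 ≤ ∑ _g : α, (1 : ℝ) := by
          apply Finset.sum_le_sum
          intro g _
          have := ha g
          nlinarith [abs_nonneg (a g), sq_abs (a g)]
      _ = N := by simp [hN]
  have f1 : ((N : ℝ) ^ 2 * D) * T ^ 2 ≤ (q ^ 2 * M) * T ^ 2 :=
    mul_le_mul_of_nonneg_right hD2 (sq_nonneg T)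
  have f2 : (N : ℝ) ^ 2 * (A * Sa2) ≤ (N : ℝ) ^ 2 * (A * N) := by
    apply mul_le_mul_of_nonneg_left _ (sq_nonneg (N : ℝ))
    exact mul_le_mul_of_nonneg_left hSa2N hA0
  have f3 : (0 : ℝ) ≤ (N : ℝ) ^ 2 * (D * Sa2) :=
    mul_nonneg (sq_nonneg _) (mul_nonneg hD0 hSa20)
  have f5 : (N : ℝ) ^ 2 * (A * N) = (N : ℝ) ^ 2 * (q * M) := by
    linear_combination ((N : ℝ) ^ 2) * hNA
  have f6 : 2 * (q : ℝ) * T ^ 2 * ((N : ℝ) * A) = 2 * q * T ^ 2 * (q * M) := by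
    linear_combination (2 * (q : ℝ) * T ^ 2) * hNA
  nlinarith [f1, f2, f3, f5, f6, sq_nonneg T]
end var

end AuxAFKK2

section MainAFKK
open Finset
set_option maxHeartbeats 2000000

open Classical in
/-- one-coordinate cut-norm bound. For a `[−1,1]`-valued
tensor `B`, sets `S₁,…,S_{d+1}`, a coordinate `j`, and a uniformly random
`q`-subset `Q_j` of `[n]^{[d+1]∖{j}}`,
`B(S₁,…,S_{d+1}) ≤ E[B(S₁,…,(Q_j ∩ ∏_{i≠j}S_i)⁺,…,S_{d+1})] + n^{d+1}/√q`. -/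
theorem one_coordinate_cut_bound (n d q : ℕ) (hq : 1 ≤ q)
    (j : Fin (d + 1))
    (hqn : q ≤ Fintype.card ({i : Fin (d + 1) // i ≠ j} → Fin n))
    (B : (Fin (d + 1) → Fin n) → ℝ) (hB : ∀ v, |B v| ≤ 1)
    (S : Fin (d + 1) → Finset (Fin n)) :
    boxSum B S ≤
      (∑ Q ∈ qSubsets n d q j,
          boxSum B (Function.update S j
            (plusSet B j (Q.filter fun g => ∀ i : {i : Fin (d + 1) // i ≠ j}, g i ∈ S i.1)))) /
        ((qSubsets n d q j).card : ℝ) +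
      (n : ℝ) ^ (d + 1) / Real.sqrt q := by
  classical
  set α := ({i : Fin (d + 1) // i ≠ j} → Fin n) with hα
  set N : ℕ := Fintype.card α with hNdef
  set a : Fin n → α → ℝ :=
    fun v g => if (∀ i : {i : Fin (d + 1) // i ≠ j}, g i ∈ S i.1) then B (insertAt j v g) else 0
    with ha
  set f : Fin n → ℝ := fun v => ∑ g, a v g with hf
  set X : Fin n → Finset α → ℝ := fun v Q => ∑ g ∈ Q, a v g with hX
  have hqS : qSubsets n d q j = (Finset.univ : Finset α).powersetCard q := by
    ext Q
    simp [qSubsets, Finset.mem_powersetCard, Finset.subset_univ]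
  set 𝒬 : Finset (Finset α) := (Finset.univ : Finset α).powersetCard q with h𝒬
  have hM : (𝒬.card : ℝ) = (N.choose q : ℕ) := by
    rw [h𝒬, card_powersetCard, card_univ]
  have hM0 : (0 : ℝ) < 𝒬.card := by
    rw [hM]
    exact_mod_cast Nat.choose_pos hqn
  -- |a| ≤ 1
  have haB : ∀ v g, |a v g| ≤ 1 := by
    intro v g
    rw [ha]
    dsimp only
    split_ifs
    · exact hB _
    · simp
  -- boxSum splits
  have hbox : boxSum B S = ∑ v ∈ S j, f v := by
    rw [boxSum_split B j S]
    apply Finset.sum_congr rfl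
    intro v _
    rw [hf]
    dsimp only
    rw [Finset.sum_filter]
  -- per-Q boxSum with update
  have hboxQ : ∀ Q : Finset α,
      boxSum B (Function.update S j
        (plusSet B j (Q.filter fun g => ∀ i : {i : Fin (d + 1) // i ≠ j}, g i ∈ S i.1)))
      = ∑ v : Fin n, if 0 < X v Q then f v else 0 := by
    intro Q
    rw [boxSum_split B j _]
    have hupj : ∀ (T : Finset (Fin n)), Function.update S j T j = T := fun T => by simp
    have hfilter : (Finset.univ.filter
        (fun g : α => ∀ i : {i : Fin (d + 1) // i ≠ j}, g i ∈
          Function.update S j (plusSet B j (Q.filter fun g => ∀ i : {i : Fin (d + 1) // i ≠ j}, g i ∈ S i.1)) i.1))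
        = Finset.univ.filter (fun g : α => ∀ i : {i : Fin (d + 1) // i ≠ j}, g i ∈ S i.1) := by
      apply Finset.filter_congr
      intro g _
      constructor
      · intro h i; have := h i; rwa [Function.update_of_ne i.2] at this
      · intro h i; rw [Function.update_of_ne i.2]; exact h i
    rw [hupj, hfilter]
    have hplus : plusSet B j (Q.filter fun g => ∀ i : {i : Fin (d + 1) // i ≠ j}, g i ∈ S i.1)
        = Finset.univ.filter (fun v => 0 < X v Q) := by
      ext v
      rw [plusSet]
      simp only [Finset.mem_filter, Finset.mem_univ, true_and]
      rw [Finset.sum_filter, hX]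
    rw [hplus, Finset.sum_filter]
    apply Finset.sum_congr rfl
    intro v _
    congr 1
    rw [hf]
    dsimp only
    rw [Finset.sum_filter]
  -- per-v main claim
  have claim : ∀ v : Fin n,
      (𝒬.card : ℝ) * (if v ∈ S j then f v else 0)
        ≤ (∑ Q ∈ 𝒬, if 0 < X v Q then f v else 0) + 𝒬.card * ((N : ℝ) / Real.sqrt q) := by
    intro v
    have hN1 : 1 ≤ N := le_trans hq hqn
    have hNr : (0 : ℝ) < N := by exact_mod_cast lt_of_lt_of_le one_pos hN1
    have hqr : (0 : ℝ) < q := by exact_mod_cast hq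
    have hstep1 : (if v ∈ S j then f v else 0) ≤ max (f v) 0 := by
      split_ifs
      · exact le_max_left _ _
      · exact le_max_right _ _
    have hM0' : (0 : ℝ) ≤ 𝒬.card := le_of_lt hM0
    have key : (𝒬.card : ℝ) * max (f v) 0
        ≤ (∑ Q ∈ 𝒬, if 0 < X v Q then f v else 0) + 𝒬.card * ((N : ℝ) / Real.sqrt q) := by
      have perQ : ∀ Q ∈ 𝒬, max (f v) 0 - (if 0 < X v Q then f v else 0)
          ≤ (if ((q : ℝ) * |f v|) ^ 2 ≤ ((N : ℝ) * (X v Q) - q * (f v)) ^ 2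
              then |f v| else 0) := by
        intro Q _
        by_cases hX0 : 0 < X v Q <;> by_cases hF : 0 < f v <;> split_ifs with hbad
        · rw [max_eq_left hF.le]
          simp [abs_nonneg]
        · rw [max_eq_left hF.le]
          simp
        · rw [max_eq_right (not_lt.1 hF)]
          have : |f v| = -(f v) := abs_of_nonpos (not_lt.1 hF)
          linarith
        · exfalso
          apply hbad
          have habs : |f v| = -(f v) := abs_of_nonpos (not_lt.1 hF)
          have hNX : (0 : ℝ) ≤ (N : ℝ) * X v Q := mul_nonneg hNr.le hX0.le
          have hle : (q : ℝ) * |f v| ≤ (N : ℝ) * (X v Q) - q * (f v) := by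
            rw [habs]; nlinarith
          have h0 : (0 : ℝ) ≤ (q : ℝ) * |f v| := mul_nonneg hqr.le (abs_nonneg _)
          exact pow_le_pow_left₀ h0 hle 2
        · rw [max_eq_left hF.le]
          have := le_abs_self (f v)
          linarith
        · exfalso
          apply hbad
          have habs : |f v| = f v := abs_of_pos hF
          have hNX : (N : ℝ) * X v Q ≤ 0 := mul_nonpos_of_nonneg_of_nonpos hNr.le (not_lt.1 hX0)
          have hqF : (0 : ℝ) ≤ (q : ℝ) * f v := mul_nonneg hqr.le hF.le
          have hprod : (0 : ℝ) ≤ (-((N : ℝ) * X v Q)) * (2 * ((q : ℝ) * f v) - (N : ℝ) * X v Q) := by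
            apply mul_nonneg (by linarith)
            linarith
          rw [habs]
          nlinarith
        · rw [max_eq_right (not_lt.1 hF)]
          simp [abs_nonneg]
        · rw [max_eq_right (not_lt.1 hF)]
          simp
      -- sum perQ over 𝒬
      have hsum := Finset.sum_le_sum perQ
      rw [Finset.sum_sub_distrib, Finset.sum_const, nsmul_eq_mul] at hsum
      set bad : Finset (Finset α) :=
        𝒬.filter (fun Q => ((q : ℝ) * |f v|) ^ 2 ≤ ((N : ℝ) * (X v Q) - q * (f v)) ^ 2) with hbadset
      have hrhs : ∑ Q ∈ 𝒬, (if ((q : ℝ) * |f v|) ^ 2 ≤ ((N : ℝ) * (X v Q) - q * (f v)) ^ 2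
          then |f v| else 0) = (bad.card : ℝ) * |f v| := by
        rw [← Finset.sum_filter, Finset.sum_const, nsmul_eq_mul]
      rw [hrhs] at hsum
      -- Chebyshev
      have cheb : (bad.card : ℝ) * ((q : ℝ) * |f v|) ^ 2
          ≤ (N : ℝ) ^ 2 * (𝒬.card : ℝ) * q := by
        have c1 : (bad.card : ℝ) * ((q : ℝ) * |f v|) ^ 2
            = ∑ Q ∈ bad, ((q : ℝ) * |f v|) ^ 2 := by
          rw [Finset.sum_const, nsmul_eq_mul]
        have c2 : ∑ Q ∈ bad, ((q : ℝ) * |f v|) ^ 2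
            ≤ ∑ Q ∈ bad, ((N : ℝ) * (X v Q) - q * (f v)) ^ 2 := by
          apply Finset.sum_le_sum
          intro Q hQ
          exact (Finset.mem_filter.1 hQ).2
        have c3 : ∑ Q ∈ bad, ((N : ℝ) * (X v Q) - q * (f v)) ^ 2
            ≤ ∑ Q ∈ 𝒬, ((N : ℝ) * (X v Q) - q * (f v)) ^ 2 := by
          apply Finset.sum_le_sum_of_subset_of_nonneg (Finset.filter_subset _ _)
          intro Q _ _
          exact sq_nonneg _
        have c4 : ∑ Q ∈ 𝒬, ((N : ℝ) * (X v Q) - q * (f v)) ^ 2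
            ≤ (N : ℝ) ^ 2 * ((N.choose q : ℕ) : ℝ) * q := by
          have := variance_bound q hq hqn (a v) (haB v)
          exact this
        rw [← hM] at c4
        calc (bad.card : ℝ) * ((q : ℝ) * |f v|) ^ 2 = _ := c1
          _ ≤ _ := c2
          _ ≤ _ := c3
          _ ≤ _ := c4
      -- deficit bound
      have hdef : (bad.card : ℝ) * |f v| ≤ (𝒬.card : ℝ) * ((N : ℝ) / Real.sqrt q) := by
        have hs : (0 : ℝ) < Real.sqrt q := Real.sqrt_pos.2 hqr
        have hsq : (Real.sqrt q) ^ 2 = q := Real.sq_sqrt hqr.le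
        have hbad0 : (0 : ℝ) ≤ (bad.card : ℝ) := Nat.cast_nonneg _
        have hbadM : (bad.card : ℝ) ≤ 𝒬.card := by
          exact_mod_cast Finset.card_filter_le _ _
        by_cases hcase : |f v| ≤ (N : ℝ) / Real.sqrt q
        · calc (bad.card : ℝ) * |f v| ≤ (𝒬.card : ℝ) * |f v| :=
              mul_le_mul_of_nonneg_right hbadM (abs_nonneg _)
            _ ≤ (𝒬.card : ℝ) * ((N : ℝ) / Real.sqrt q) :=
              mul_le_mul_of_nonneg_left hcase hM0'
        · push_neg at hcase
          have h1 : (N : ℝ) < Real.sqrt q * |f v| := by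
            rw [div_lt_iff₀ hs] at hcase
            linarith [hcase]
          have hb0 : (0 : ℝ) < |f v| := lt_of_le_of_lt (div_nonneg hNr.le hs.le) hcase
          rw [mul_div_assoc' _ _ _, le_div_iff₀ hs]
          -- goal : bad.card * |f v| * sqrt q ≤ 𝒬.card * N
          have hb2 : (0 : ℝ) < Real.sqrt q * ((q : ℝ) * |f v|) :=
            mul_pos hs (mul_pos hqr hb0)
          have e1 : (bad.card : ℝ) * (q : ℝ) ^ 2 * |f v| ^ 2 ≤ (N : ℝ) ^ 2 * 𝒬.card * q := by
            nlinarith [cheb]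
          have h3 : (N : ℝ) ^ 2 * (𝒬.card : ℝ) * q
              ≤ (𝒬.card : ℝ) * (N : ℝ) * q * (Real.sqrt q * |f v|) := by
            have h4 := mul_le_mul_of_nonneg_left h1.le
              (mul_nonneg (mul_nonneg hM0' hNr.le) hqr.le)
            nlinarith [h4]
          have l1 : ((bad.card : ℝ) * |f v| * Real.sqrt q) * (Real.sqrt q * ((q : ℝ) * |f v|))
              = (bad.card : ℝ) * (q : ℝ) * |f v| ^ 2 * (Real.sqrt q) ^ 2 := by ring
          have l2 : ((bad.card : ℝ) * |f v| * Real.sqrt q) * (Real.sqrt q * ((q : ℝ) * |f v|))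
              = (bad.card : ℝ) * (q : ℝ) ^ 2 * |f v| ^ 2 := by rw [l1, hsq]; ring
          have r2 : ((𝒬.card : ℝ) * (N : ℝ)) * (Real.sqrt q * ((q : ℝ) * |f v|))
              = (𝒬.card : ℝ) * (N : ℝ) * q * (Real.sqrt q * |f v|) := by ring
          have key2 : ((bad.card : ℝ) * |f v| * Real.sqrt q) * (Real.sqrt q * ((q : ℝ) * |f v|))
              ≤ ((𝒬.card : ℝ) * (N : ℝ)) * (Real.sqrt q * ((q : ℝ) * |f v|)) := by
            rw [l2, r2]; linarith [e1, h3]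
          exact le_of_mul_le_mul_right key2 hb2
      linarith [hsum, hdef]
    calc (𝒬.card : ℝ) * (if v ∈ S j then f v else 0)
        ≤ (𝒬.card : ℝ) * max (f v) 0 := mul_le_mul_of_nonneg_left hstep1 hM0'
      _ ≤ _ := key
  -- assemble
  have hswap : ∑ Q ∈ 𝒬, ∑ v : Fin n, (if 0 < X v Q then f v else 0)
      = ∑ v : Fin n, ∑ Q ∈ 𝒬, (if 0 < X v Q then f v else 0) := Finset.sum_comm
  have hsumclaim : (𝒬.card : ℝ) * ∑ v ∈ S j, f v
      ≤ (∑ Q ∈ 𝒬, ∑ v : Fin n, (if 0 < X v Q then f v else 0))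
        + 𝒬.card * ((n : ℝ) ^ (d + 1) / Real.sqrt q) := by
    have h1 : (𝒬.card : ℝ) * ∑ v ∈ S j, f v
        = ∑ v : Fin n, (𝒬.card : ℝ) * (if v ∈ S j then f v else 0) := by
      rw [← Finset.mul_sum]
      congr 1
      rw [Finset.sum_ite_mem, Finset.univ_inter]
    rw [h1, hswap]
    have h2 := Finset.sum_le_sum (fun v (_ : v ∈ (Finset.univ : Finset (Fin n))) => claim v)
    rw [Finset.sum_add_distrib, Finset.sum_const] at h2
    have hcount : (Finset.univ : Finset (Fin n)).card = n := by simp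
    have hNn : (N : ℝ) = (n : ℝ) ^ d := by
      have h4 : N = n ^ d := by
        rw [hNdef]
        have h3 : Fintype.card {i : Fin (d + 1) // i ≠ j} = d := by
          simp [Fintype.card_subtype_compl]
        show Fintype.card ({i : Fin (d + 1) // i ≠ j} → Fin n) = n ^ d
        rw [Fintype.card_fun, h3, Fintype.card_fin]
      rw [h4]
      push_cast
      ring
    have hpow : (n : ℝ) * ((N : ℝ) / Real.sqrt q) = (n : ℝ) ^ (d + 1) / Real.sqrt q := by
      rw [hNn]
      rw [pow_succ]
      ring
    calc ∑ v : Fin n, (𝒬.card : ℝ) * (if v ∈ S j then f v else 0)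
        ≤ (∑ v : Fin n, ∑ Q ∈ 𝒬, (if 0 < X v Q then f v else 0))
          + (Finset.univ : Finset (Fin n)).card • ((𝒬.card : ℝ) * ((N : ℝ) / Real.sqrt q)) := h2
      _ = (∑ v : Fin n, ∑ Q ∈ 𝒬, (if 0 < X v Q then f v else 0))
          + 𝒬.card * ((n : ℝ) ^ (d + 1) / Real.sqrt q) := by
          rw [hcount, nsmul_eq_mul, ← hpow]
          ring
  -- finish
  rw [hbox, hqS]
  rw [Finset.sum_congr rfl (fun Q (_ : Q ∈ 𝒬) => hboxQ Q)]
  rw [hswap] at hsumclaim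
  rw [← hswap] at hsumclaim
  have hfinal : ∑ v ∈ S j, f v
      ≤ ((∑ Q ∈ 𝒬, ∑ v : Fin n, (if 0 < X v Q then f v else 0))
          + 𝒬.card * ((n : ℝ) ^ (d + 1) / Real.sqrt q)) / 𝒬.card := by
    rw [le_div_iff₀ hM0]
    calc (∑ v ∈ S j, f v) * 𝒬.card = (𝒬.card : ℝ) * ∑ v ∈ S j, f v := by ring
      _ ≤ _ := hsumclaim
  calc ∑ v ∈ S j, f v ≤ _ := hfinal
    _ = (∑ Q ∈ 𝒬, ∑ v : Fin n, (if 0 < X v Q then f v else 0)) / 𝒬.card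
        + (n : ℝ) ^ (d + 1) / Real.sqrt q := by
        rw [add_div, mul_div_cancel_left₀ _ (ne_of_gt hM0)]

end MainAFKK
end
end

section
/- Iterated cut-norm bound: let B : [n]^{d+1} → [−1,1] and let Q₁,...,Q_{d+1} be independent uniformly random q-subsets of [n]^{[d+1]∖{j}} (for j = 1,...,d+1 respectively). Then the one-sided cut-norm satisfies ‖B‖⁺_{□,d} ≤ (1/n^{d+1}) E[max over R_j ⊆ Q_j of B(R₁⁺,...,R_{d+1}⁺)] + (d+1)/√q, where ‖B‖⁺_{□,d} = max over S₁,...,S_{d+1}⊆[n] of B(S₁,...,S_{d+1})/n^{d+1}, and R⁺ is the positive-majority set defined from R as in the one-coordinate bound. -/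
open MeasureTheory

noncomputable section

/-- The one-sided cut-norm of a tensor on `[n]^{d+1}`. -/
def onesidedCutNorm (n d : ℕ) (B : (Fin (d + 1) → Fin n) → ℝ) : ℝ :=
  (⨆ S : Fin (d + 1) → Finset (Fin n), boxSum B S) / (n : ℝ) ^ (d + 1)

/-- The inner maximum `max_{R_j ⊆ Q_j} B(R₁⁺,…,R_{d+1}⁺)`. -/
def innerMax {n d : ℕ} (B : (Fin (d + 1) → Fin n) → ℝ)
    (Q : ∀ j : Fin (d + 1), Finset ({i : Fin (d + 1) // i ≠ j} → Fin n)) : ℝ :=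
  sSup { r | ∃ R : ∀ j : Fin (d + 1), Finset ({i : Fin (d + 1) // i ≠ j} → Fin n),
    (∀ j, R j ⊆ Q j) ∧ r = boxSum B (fun j => plusSet B j (R j)) }

/-!
Fix boxes `S₁, …, S_{d+1}` and replace them one coordinate at a time: the `j`-th side becomes the
positive-majority set `R_j⁺` of the sampled tuples `R_j ⊆ Q_j` lying in the current box. For each
`v`, the sampled slice sum `∑_{g ∈ R_j} B(g, v)`, rescaled by `n^d / q`, estimates the full slice
sum with mean absolute error at most `n^d / √q` (a variance computation for sampling without
replacement). Keeping exactly the `v` with positive estimate loses, at each `v`, at most the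
estimation error, so the replacement costs at most `n^{d+1} / √q` in expectation. The current box
depends only on `Q₁, …, Q_{j-1}`, so `Q_j` is still a fresh uniform sample for it. After `d + 1`
steps the box is `(R₁⁺, …, R_{d+1}⁺)`, whose value is at most the inner maximum.
-/

open Finset

section Sampling

variable {α : Type*} [Fintype α] [DecidableEq α]

lemma card_filter_superset_powersetCard_congr {s s' : Finset α} (h : #s = #s') (q : ℕ) :
    #{Q ∈ powersetCard q univ | s ⊆ Q} = #{Q ∈ powersetCard q univ | s' ⊆ Q} := by
  by_cases hsq : #s ≤ q
  · rw [card_filter_powersetCard_subset _ _ _ (subset_univ s) hsq,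
      card_filter_powersetCard_subset _ _ _ (subset_univ s') (h ▸ hsq), h]
  · have empty (s : Finset α) (hs : q < #s) :
        {Q ∈ powersetCard q (univ : Finset α) | s ⊆ Q} = ∅ :=
      filter_false_of_mem fun Q hQ hsQ => by
        have := card_le_card hsQ
        rw [mem_powersetCard_univ.1 hQ] at this
        omega
    rw [empty s (by omega), empty s' (by omega)]

lemma sum_sq_sum_eq_sum_sum_card_mul (𝒬 : Finset (Finset α)) (b : α → ℝ) :
    ∑ Q ∈ 𝒬, (∑ g ∈ Q, b g) ^ 2 = ∑ g, ∑ h, (#{Q ∈ 𝒬 | {g, h} ⊆ Q} : ℝ) * (b g * b h) := by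
  have (Q : Finset α) : (∑ g ∈ Q, b g) ^ 2 = ∑ g, ∑ h, if {g, h} ⊆ Q then b g * b h else 0 := by
    rw [sq, ← univ_inter Q, ← sum_ite_mem, sum_mul_sum]
    simp_rw [ite_zero_mul_ite_zero, insert_subset_iff, singleton_subset_iff, univ_inter]
  simp_rw [this]
  rw [sum_comm]
  simp_rw [sum_comm (s := 𝒬), ← sum_filter, sum_const, nsmul_eq_mul]

lemma card_mul_sum_powersetCard_sq_sum_le (q : ℕ) (b : α → ℝ) (hb : ∑ g, b g = 0) :
    Fintype.card α * ∑ Q ∈ powersetCard q univ, (∑ g ∈ Q, b g) ^ 2 ≤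
      #(powersetCard q (univ : Finset α)) * q * ∑ g, b g ^ 2 := by
  rcases subsingleton_or_nontrivial α with hα | hα
  · have hb0 : b = 0 := funext fun g => by rw [← Fintype.sum_subsingleton b g, hb, Pi.zero_apply]
    simp [hb0]
  obtain ⟨g₀, h₀, hne⟩ := exists_pair_ne α
  set M := powersetCard q (univ : Finset α)
  set t := #{Q ∈ M | {g₀} ⊆ Q}
  set u := #{Q ∈ M | {g₀, h₀} ⊆ Q}
  have ht (g : α) : #{Q ∈ M | {g, g} ⊆ Q} = t :=
    card_filter_superset_powersetCard_congr (by simp) q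
  have hu (g h : α) (hgh : g ≠ h) : #{Q ∈ M | {g, h} ⊆ Q} = u :=
    card_filter_superset_powersetCard_congr (by rw [card_pair hgh, card_pair hne]) q
  have hNt : (Fintype.card α : ℝ) * t = #M * q := by
    rw [← Nat.cast_mul, ← Nat.cast_mul, ← sum_card fun g => by simpa using ht g,
      sum_const_nat fun Q hQ => mem_powersetCard_univ.1 hQ]
  -- `∑ b = 0` kills the off-diagonal terms, all of which carry the same weight `u`
  have row (g : α) :
      ∑ h, (#{Q ∈ M | {g, h} ⊆ Q} : ℝ) * (b g * b h) = ((t : ℝ) - u) * b g ^ 2 := by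
    rw [← add_sum_erase _ _ (mem_univ g), ht,
      sum_congr rfl fun h hh => by rw [hu g h (ne_of_mem_erase hh).symm], ← mul_sum, ← mul_sum,
      sum_erase_eq_sub (mem_univ g), hb]
    ring
  rw [sum_sq_sum_eq_sum_sum_card_mul, sum_congr rfl fun g _ => row g, ← mul_sum, ← mul_assoc,
    ← hNt]
  gcongr
  exact sub_le_self _ u.cast_nonneg

lemma sum_powersetCard_abs_sub_le {q : ℕ} (hq : 0 < q) (a : α → ℝ) (ha : ∀ g, |a g| ≤ 1) :
    ∑ Q ∈ powersetCard q univ, |∑ g, a g - (Fintype.card α / q) * ∑ g ∈ Q, a g| ≤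
      #(powersetCard q (univ : Finset α)) * (Fintype.card α / √q) := by
  set N := Fintype.card α
  set M := powersetCard q (univ : Finset α)
  set S := ∑ g, a g
  rcases Nat.eq_zero_or_pos N with hN | hN
  · have : IsEmpty α := Fintype.card_eq_zero_iff.1 hN
    simp [S, N]
  have hN' : (0 : ℝ) < N := by exact_mod_cast hN
  have hq' : (0 : ℝ) < q := by exact_mod_cast hq
  set b := fun g => a g - S / N
  have hb : ∑ g, b g = 0 := by
    simp only [b, sum_sub_distrib, sum_const, card_univ, nsmul_eq_mul]
    field_simp
    ring
  have hsum_b (Q : Finset α) (hQ : Q ∈ M) :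
      S - (N / q) * ∑ g ∈ Q, a g = -(N / q) * ∑ g ∈ Q, b g := by
    simp only [b, sum_sub_distrib, sum_const, mem_powersetCard_univ.1 hQ, nsmul_eq_mul]
    field_simp
    ring
  have hbsq : ∑ g, b g ^ 2 ≤ N := calc
    ∑ g, b g ^ 2 = ∑ g, a g ^ 2 - N * (S / N) ^ 2 := by
      have hS : ∑ g, a g = S := rfl
      simp only [b, sub_sq, sum_add_distrib, sum_sub_distrib, ← sum_mul, ← mul_sum, sum_const,
        card_univ, nsmul_eq_mul, hS]
      field_simp
      ring
    _ ≤ ∑ _g : α, 1 := by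
      have ha2 (g : α) : a g ^ 2 ≤ 1 := (sq_le_one_iff_abs_le_one _).2 (ha g)
      have : 0 ≤ N * (S / N) ^ 2 := by positivity
      linarith [sum_le_sum fun g (_ : g ∈ univ) => ha2 g]
    _ = N := by simp [N]
  have hvar : ∑ Q ∈ M, (∑ g ∈ Q, b g) ^ 2 ≤ #M * q := by
    refine le_of_mul_le_mul_left ((card_mul_sum_powersetCard_sq_sum_le q b hb).trans ?_) hN'
    calc (#M : ℝ) * q * ∑ g, b g ^ 2 ≤ #M * q * N := by gcongr
      _ = N * (#M * q) := by ring
  have hCS : ∑ Q ∈ M, |∑ g ∈ Q, b g| ≤ #M * √q := by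
    rw [← Real.sqrt_sq (by positivity : (0 : ℝ) ≤ #M), ← Real.sqrt_mul (by positivity)]
    refine Real.le_sqrt_of_sq_le ?_
    calc (∑ Q ∈ M, |∑ g ∈ Q, b g|) ^ 2 ≤ #M * ∑ Q ∈ M, |∑ g ∈ Q, b g| ^ 2 :=
          sq_sum_le_card_mul_sum_sq
      _ ≤ #M * (#M * q) := by simp_rw [sq_abs]; gcongr
      _ = #M ^ 2 * q := by ring
  calc ∑ Q ∈ M, |S - (N / q) * ∑ g ∈ Q, a g| = N / q * ∑ Q ∈ M, |∑ g ∈ Q, b g| := by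
        rw [mul_sum]
        refine sum_congr rfl fun Q hQ => ?_
        rw [hsum_b Q hQ, abs_mul, abs_neg, abs_of_pos (by positivity)]
    _ ≤ N / q * (#M * √q) := by gcongr
    _ = #M * N * (√q / q) := by ring
    _ = #M * (N / √q) := by rw [Real.sqrt_div_self']; ring

end Sampling

lemma sum_sub_sum_filter_pos_le_sum_abs {ι : Type*} [Fintype ι] (s : Finset ι) (f Y : ι → ℝ)
    {c : ℝ} (hc : 0 ≤ c) : ∑ i ∈ s, f i - ∑ i with 0 < Y i, f i ≤ ∑ i, |f i - c * Y i| := by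
  classical
  rw [← univ_inter s, ← sum_ite_mem, sum_filter, ← sum_sub_distrib]
  refine sum_le_sum fun i _ => ?_
  split_ifs with hs hY hY
  · simp
  · linarith [mul_nonpos_of_nonneg_of_nonpos hc (not_lt.1 hY), le_abs_self (f i - c * Y i)]
  · linarith [mul_nonneg hc hY.le, neg_abs_le (f i - c * Y i)]
  · simp

lemma sum_piFinset_eq_sum_sum_piSplitAt {ι : Type*} [Fintype ι] [DecidableEq ι] {β : ι → Type*}
    [∀ i, DecidableEq (β i)] {M : Type*} [AddCommMonoid M] (j : ι) (V : ∀ i, Finset (β i))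
    (F : (∀ i, β i) → M) :
    ∑ w ∈ Fintype.piFinset V, F w =
      ∑ x ∈ V j, ∑ g ∈ Fintype.piFinset fun i : {i // i ≠ j} => V i,
        F ((Equiv.piSplitAt j β).symm (x, g)) := by
  rw [← sum_product']
  refine sum_equiv (Equiv.piSplitAt j β) (fun w => ?_) fun w _ => by rw [Equiv.symm_apply_apply]
  simp only [Fintype.mem_piFinset, mem_product, Equiv.piSplitAt_apply, Subtype.forall]
  exact ⟨fun h => ⟨h j, fun i _ => h i⟩, fun h i => if hij : i = j then hij ▸ h.1 else h.2 i hij⟩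

section Tensor

variable {n d : ℕ}

lemma insertAt_eq_piSplitAt_symm (j : Fin (d + 1)) (v : Fin n)
    (g : {i : Fin (d + 1) // i ≠ j} → Fin n) :
    insertAt j v g = (Equiv.piSplitAt j fun _ => Fin n).symm (v, g) := by
  funext i
  by_cases h : i = j <;> simp [insertAt, h]

def boxExcept (T : Fin (d + 1) → Finset (Fin n)) (j : Fin (d + 1)) :
    Finset ({i : Fin (d + 1) // i ≠ j} → Fin n) :=
  Fintype.piFinset fun i => T i

lemma boxExcept_update (T : Fin (d + 1) → Finset (Fin n)) (j : Fin (d + 1))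
    (P : Finset (Fin n)) : boxExcept (Function.update T j P) j = boxExcept T j := by
  simp only [boxExcept]
  congr 1
  funext i
  exact Function.update_of_ne i.2 _ _

lemma boxSum_eq_sum_sum_insertAt (B : (Fin (d + 1) → Fin n) → ℝ)
    (T : Fin (d + 1) → Finset (Fin n)) (j : Fin (d + 1)) :
    boxSum B T = ∑ v ∈ T j, ∑ g ∈ boxExcept T j, B (insertAt j v g) := by
  simp only [boxSum, boxExcept, insertAt_eq_piSplitAt_symm]
  exact sum_piFinset_eq_sum_sum_piSplitAt j T B

lemma boxSum_le_pow {B : (Fin (d + 1) → Fin n) → ℝ} (hB : ∀ v, |B v| ≤ 1)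
    (T : Fin (d + 1) → Finset (Fin n)) : boxSum B T ≤ (n : ℝ) ^ (d + 1) :=
  calc boxSum B T ≤ ∑ _v ∈ Fintype.piFinset T, (1 : ℝ) :=
        sum_le_sum fun v _ => le_of_abs_le (hB v)
    _ ≤ Fintype.card (Fin (d + 1) → Fin n) := by
        rw [sum_const, nsmul_one]
        exact_mod_cast card_le_univ _
    _ = (n : ℝ) ^ (d + 1) := by simp

lemma boxSum_plusSet_le_innerMax {B : (Fin (d + 1) → Fin n) → ℝ} (hB : ∀ v, |B v| ≤ 1)
    {Q R : ∀ j : Fin (d + 1), Finset ({i : Fin (d + 1) // i ≠ j} → Fin n)}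
    (hRQ : ∀ j, R j ⊆ Q j) : boxSum B (fun j => plusSet B j (R j)) ≤ innerMax B Q :=
  le_csSup ⟨_, by rintro _ ⟨R', -, rfl⟩; exact boxSum_le_pow hB _⟩ ⟨R, hRQ, rfl⟩

lemma qSubsets_eq_powersetCard (q : ℕ) (j : Fin (d + 1)) :
    qSubsets n d q j = powersetCard q univ := by
  ext Q
  simp [qSubsets]

lemma sum_qSubsets_boxSum_sub_boxSum_update_le {q : ℕ} (hq : 0 < q)
    {B : (Fin (d + 1) → Fin n) → ℝ} (hB : ∀ v, |B v| ≤ 1) (T : Fin (d + 1) → Finset (Fin n))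
    (j : Fin (d + 1)) :
    ∑ Qj ∈ qSubsets n d q j,
        (boxSum B T - boxSum B (Function.update T j (plusSet B j (Qj ∩ boxExcept T j)))) ≤
      #(qSubsets n d q j) * ((n : ℝ) ^ (d + 1) / √q) := by
  set E := boxExcept T j
  set a : Fin n → ({i : Fin (d + 1) // i ≠ j} → Fin n) → ℝ :=
    fun v g => if g ∈ E then B (insertAt j v g) else 0
  have hsum_a (R : Finset _) (v : Fin n) : ∑ g ∈ R ∩ E, B (insertAt j v g) = ∑ g ∈ R, a v g :=
    (sum_ite_mem R E _).symm
  -- `n ^ d` is the number of partial tuples, so `n ^ d / q` rescales a `q`-sample to the whole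
  have hpoint (Qj : Finset _) :
      boxSum B T - boxSum B (Function.update T j (plusSet B j (Qj ∩ E))) ≤
        ∑ v, |∑ g, a v g - (n ^ d / q) * ∑ g ∈ Qj, a v g| := by
    rw [boxSum_eq_sum_sum_insertAt B T j, boxSum_eq_sum_sum_insertAt B _ j, Function.update_self,
      boxExcept_update]
    convert sum_sub_sum_filter_pos_le_sum_abs (T j) _ (fun v => ∑ g ∈ Qj ∩ E, B (insertAt j v g))
      (by positivity : (0 : ℝ) ≤ n ^ d / q) using 3 with v
    · simp [plusSet]
    · rw [← hsum_a, univ_inter, hsum_a]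
  calc _ ≤ ∑ Qj ∈ qSubsets n d q j, ∑ v, |∑ g, a v g - (n ^ d / q) * ∑ g ∈ Qj, a v g| :=
        sum_le_sum fun Qj _ => hpoint Qj
    _ = ∑ v, ∑ Qj ∈ qSubsets n d q j, |∑ g, a v g - (n ^ d / q) * ∑ g ∈ Qj, a v g| := sum_comm
    _ ≤ ∑ _v : Fin n, #(qSubsets n d q j) * ((n : ℝ) ^ d / √q) := by
        refine sum_le_sum fun v _ => ?_
        have := sum_powersetCard_abs_sub_le hq (a v) fun g => by
          simp only [a]; split_ifs <;> simp [hB]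
        simpa [qSubsets_eq_powersetCard] using this
    _ = #(qSubsets n d q j) * ((n : ℝ) ^ (d + 1) / √q) := by
        rw [sum_const, card_univ, Fintype.card_fin, nsmul_eq_mul]
        ring

end Tensor

section Hybrid

variable {n d : ℕ} (B : (Fin (d + 1) → Fin n) → ℝ) (S : Fin (d + 1) → Finset (Fin n))

def hybrid (Q : ∀ j : Fin (d + 1), Finset ({i : Fin (d + 1) // i ≠ j} → Fin n)) :
    ℕ → Fin (d + 1) → Finset (Fin n)
  | 0 => S
  | k + 1 => fun i =>
    if (i : ℕ) = k then plusSet B i (Q i ∩ boxExcept (hybrid Q k) i) else hybrid Q k i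

variable {Q Q' : ∀ j : Fin (d + 1), Finset ({i : Fin (d + 1) // i ≠ j} → Fin n)}

lemma hybrid_of_lt {k : ℕ} {i : Fin (d + 1)} (hk : (i : ℕ) < k) :
    hybrid B S Q k i = plusSet B i (Q i ∩ boxExcept (hybrid B S Q i) i) := by
  induction k with
  | zero => omega
  | succ k ih =>
    rcases (Nat.lt_succ_iff.1 hk).lt_or_eq with hik | hik
    · simp [hybrid, hik.ne, ih hik]
    · simp [hybrid, hik]

lemma hybrid_succ (k : Fin (d + 1)) :
    hybrid B S Q (k + 1) =
      Function.update (hybrid B S Q k) k (plusSet B k (Q k ∩ boxExcept (hybrid B S Q k) k)) := by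
  funext i
  by_cases hik : i = k
  · subst hik; simp [hybrid]
  · simp [hybrid, hik, Fin.val_ne_iff.2 hik]

lemma hybrid_congr {k : ℕ} (h : ∀ i : Fin (d + 1), (i : ℕ) < k → Q i = Q' i) :
    hybrid B S Q k = hybrid B S Q' k := by
  induction k with
  | zero => rfl
  | succ k ih =>
    funext i
    simp only [hybrid, ih fun i hi => h i (by omega)]
    split_ifs with hik
    · rw [h i (by omega)]
    · rfl

end Hybrid

lemma sum_boxSum_hybrid_sub_boxSum_hybrid_succ_le {n d q : ℕ} (hq : 0 < q)
    {B : (Fin (d + 1) → Fin n) → ℝ} (hB : ∀ v, |B v| ≤ 1) (S : Fin (d + 1) → Finset (Fin n))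
    (k : Fin (d + 1)) :
    ∑ Q ∈ Fintype.piFinset (qSubsets n d q),
        (boxSum B (hybrid B S Q k) - boxSum B (hybrid B S Q (k + 1))) ≤
      #(Fintype.piFinset (qSubsets n d q)) * ((n : ℝ) ^ (d + 1) / √q) := by
  rw [← nsmul_eq_mul, ← sum_const]
  simp only [sum_piFinset_eq_sum_sum_piSplitAt k]
  refine sum_comm.trans_le ((sum_le_sum fun Q' _ => ?_).trans_eq sum_comm)
  let Q (x : Finset ({i : Fin (d + 1) // i ≠ k} → Fin n)) :=
    (Equiv.piSplitAt k fun j => Finset ({i : Fin (d + 1) // i ≠ j} → Fin n)).symm (x, Q')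
  set T := hybrid B S (Q ∅) k
  have hT (x) : hybrid B S (Q x) k = T :=
    hybrid_congr B S fun i hi => by simp [Q, Fin.val_ne_iff.1 hi.ne]
  rw [sum_const, nsmul_eq_mul]
  refine (sum_congr rfl fun x _ => ?_).trans_le
    (sum_qSubsets_boxSum_sub_boxSum_update_le hq hB T k)
  change boxSum B (hybrid B S (Q x) k) - boxSum B (hybrid B S (Q x) (k + 1)) = _
  rw [hybrid_succ, hT]
  simp [Q]

lemma sum_boxSum_sub_boxSum_hybrid_le {n d q : ℕ} (hq : 0 < q)
    {B : (Fin (d + 1) → Fin n) → ℝ} (hB : ∀ v, |B v| ≤ 1) (S : Fin (d + 1) → Finset (Fin n)) :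
    ∑ Q ∈ Fintype.piFinset (qSubsets n d q), (boxSum B S - boxSum B (hybrid B S Q (d + 1))) ≤
      (d + 1) * (#(Fintype.piFinset (qSubsets n d q)) * ((n : ℝ) ^ (d + 1) / √q)) := by
  have htel (Q) : boxSum B S - boxSum B (hybrid B S Q (d + 1)) =
      ∑ k : Fin (d + 1), (boxSum B (hybrid B S Q k) - boxSum B (hybrid B S Q (k + 1))) := by
    rw [Fin.sum_univ_eq_sum_range fun k => boxSum B (hybrid B S Q k) -
      boxSum B (hybrid B S Q (k + 1)), sum_range_sub']
    rfl
  simp_rw [htel]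
  rw [sum_comm]
  refine (sum_le_sum fun k _ => sum_boxSum_hybrid_sub_boxSum_hybrid_succ_le hq hB S k).trans ?_
  simp

/-- iterated cut-norm bound. With `Q₁,…,Q_{d+1}` independent
uniformly random `q`-subsets,
`‖B‖⁺_{□,d} ≤ (1/n^{d+1}) E[max_{R_j ⊆ Q_j} B(R₁⁺,…,R_{d+1}⁺)] + (d+1)/√q`. -/
theorem iterated_cut_bound (n d q : ℕ) (hq : 1 ≤ q)
    (hqn : ∀ j : Fin (d + 1),
      q ≤ Fintype.card ({i : Fin (d + 1) // i ≠ j} → Fin n))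
    (B : (Fin (d + 1) → Fin n) → ℝ) (hB : ∀ v, |B v| ≤ 1) :
    onesidedCutNorm n d B ≤
      (1 / (n : ℝ) ^ (d + 1)) *
        ((∑ Q ∈ Fintype.piFinset (fun j => qSubsets n d q j), innerMax B Q) /
          ((Fintype.piFinset (fun j => qSubsets n d q j)).card : ℝ)) +
      ((d : ℝ) + 1) / Real.sqrt q := by
  set Qs := Fintype.piFinset (qSubsets n d q)
  have hQs : (0 : ℝ) < #Qs := by
    rw [Fintype.card_piFinset]
    exact_mod_cast prod_pos fun j _ => by
      simpa [qSubsets_eq_powersetCard] using Nat.choose_pos (hqn j)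
  have hbox (S : Fin (d + 1) → Finset (Fin n)) :
      boxSum B S ≤ (∑ Q ∈ Qs, innerMax B Q) / #Qs + (d + 1) * ((n : ℝ) ^ (d + 1) / √q) := by
    have htel := sum_boxSum_sub_boxSum_hybrid_le hq hB S
    have hmax : ∑ Q ∈ Qs, boxSum B (hybrid B S Q (d + 1)) ≤ ∑ Q ∈ Qs, innerMax B Q :=
      sum_le_sum fun Q _ => by
        rw [show hybrid B S Q (d + 1) = _ from funext fun i => hybrid_of_lt B S i.isLt]
        exact boxSum_plusSet_le_innerMax hB fun j => inter_subset_left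
    rw [sum_sub_distrib, sum_const, nsmul_eq_mul] at htel
    rw [← sub_le_iff_le_add, le_div_iff₀ hQs]
    linarith
  rcases n.eq_zero_or_pos with rfl | hn
  · simp [onesidedCutNorm]
    positivity
  rw [onesidedCutNorm, div_le_iff₀ (by positivity)]
  refine ciSup_le fun S => (hbox S).trans (le_of_eq ?_)
  field_simp
end
end

section
/- Induced homomorphism density as sampling probability: for a complexon W and a finite simplicial complex F with V(F) = [n], t_ind(F, W) = Pr{𝕂(n, W) = F}, where t_ind(F,W) = ∫_{[0,1]^n} ∏_{σ∈F} W(x_σ) ∏_{τ∈antifacets(F)} (1 − W(x_τ)) dx. -/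
/-!
Given the sample points `x`, the labels `u τ` are independent uniform variables, and
`𝕂(n,W) = F` holds iff `u σ ≤ W(x_σ)` for every face `σ` of `F` and `W(x_τ) < u τ` for
every antifacet `τ`: a complex is pinned down by its faces and antifacets, because every
nonempty non-face contains an antifacet. Faces and antifacets are disjoint, so the
conditional probability of this box given `x` is the integrand of `t_ind(F, W)`, and
Fubini concludes.
-/

open MeasureTheory

noncomputable section

variable {V : Type*} [DecidableEq V] [Fintype V]

instance (n : ℕ) : MeasurableSpace (Finset (Finset (Fin n))) := ⊤

open Classical in
/-- The face set of the random complex `𝕂(n,W)` as a function of the sample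
points `x` and the independent uniform labels `u`: a nonempty `σ ⊆ [n]` is a
face iff `u τ ≤ W(x_τ)` for every nonempty `τ ⊆ σ`. -/
def sampleFaces (W : Multiset ℝ → ℝ) (n : ℕ) (x : Fin n → ℝ)
    (u : Finset (Fin n) → ℝ) : Finset (Finset (Fin n)) :=
  Finset.univ.filter fun σ => σ.Nonempty ∧
    ∀ τ ∈ σ.powerset, τ.Nonempty → u τ ≤ W (τ.val.map x)

instance inst_s18 : IsProbabilityMeasure unifI :=
  ⟨by simp [unifI, Real.volume_Icc]⟩

lemma unifI_Iic {a : ℝ} (ha : a ≤ 1) : unifI (Set.Iic a) = ENNReal.ofReal a := by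
  have : Set.Iic a ∩ Set.Icc 0 1 = Set.Icc 0 a := by
    ext; simp only [Set.mem_inter_iff, Set.mem_Iic, Set.mem_Icc]; grind
  rw [unifI, Measure.restrict_apply measurableSet_Iic, this, Real.volume_Icc, sub_zero]

lemma unifI_Ioi {a : ℝ} (ha : 0 ≤ a) : unifI (Set.Ioi a) = ENNReal.ofReal (1 - a) := by
  have : Set.Ioi a ∩ Set.Icc 0 1 = Set.Ioc a 1 := by
    ext; simp only [Set.mem_inter_iff, Set.mem_Ioi, Set.mem_Icc, Set.mem_Ioc]; grind
  rw [unifI, Measure.restrict_apply measurableSet_Ioi, this, Real.volume_Ioc]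

instance inst_s18_2 (ι : Type*) [Fintype ι] : IsProbabilityMeasure (piUnif ι) := by
  unfold piUnif; infer_instance

lemma piUnif_setOf_le_and_lt {ι : Type*} [Fintype ι] {A B : Finset ι} (hAB : Disjoint A B)
    {w : ι → ℝ} (hw : ∀ i, w i ∈ Set.Icc 0 1) :
    piUnif ι {u | (∀ i ∈ A, u i ≤ w i) ∧ ∀ i ∈ B, w i < u i} =
      ENNReal.ofReal ((∏ i ∈ A, w i) * ∏ i ∈ B, (1 - w i)) := by
  classical
  have hbox : {u : ι → ℝ | (∀ i ∈ A, u i ≤ w i) ∧ ∀ i ∈ B, w i < u i} =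
      Set.univ.pi fun i => {t | (i ∈ A → t ≤ w i) ∧ (i ∈ B → w i < t)} := by
    ext u; simp [Set.mem_pi, forall_and]
  have hfactor (i : ι) : unifI {t | (i ∈ A → t ≤ w i) ∧ (i ∈ B → w i < t)} =
      (if i ∈ A then ENNReal.ofReal (w i) else 1) *
        (if i ∈ B then ENNReal.ofReal (1 - w i) else 1) := by
    by_cases hA : i ∈ A
    · have hB : i ∉ B := Finset.disjoint_left.mp hAB hA
      simp only [hA, hB, true_implies, false_implies, and_true, if_true, if_false, mul_one]
      exact unifI_Iic (hw i).2
    · by_cases hB : i ∈ B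
      · simp only [hA, hB, true_implies, false_implies, true_and, if_true, if_false, one_mul]
        exact unifI_Ioi (hw i).1
      · simp [hA, hB]
  have hA₀ : ∀ i ∈ A, 0 ≤ w i := fun i _ => (hw i).1
  have hB₀ : ∀ i ∈ B, 0 ≤ 1 - w i := fun i _ => sub_nonneg.mpr (hw i).2
  rw [hbox, piUnif, Measure.pi_pi, Finset.prod_congr rfl fun i _ => hfactor i,
    Finset.prod_mul_distrib, Finset.prod_ite_mem, Finset.prod_ite_mem, Finset.univ_inter,
    Finset.univ_inter, ENNReal.ofReal_mul (Finset.prod_nonneg hA₀),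
    ENNReal.ofReal_prod_of_nonneg hA₀, ENNReal.ofReal_prod_of_nonneg hB₀]

lemma SComplex.mem_antifacets {F : SComplex V} {τ : Finset V} :
    τ ∈ F.antifacets ↔
      τ.Nonempty ∧ τ ∉ F.faces ∧ ∀ ρ ⊂ τ, ρ.Nonempty → ρ ∈ F.faces := by
  simp [SComplex.antifacets]

lemma SComplex.exists_antifacet_subset (F : SComplex V) {σ : Finset V} (hσ : σ.Nonempty)
    (hσF : σ ∉ F.faces) : ∃ τ ∈ F.antifacets, τ ⊆ σ := by
  induction σ using Finset.strongInduction with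
  | H σ ih =>
    by_cases hmin : ∀ τ ⊂ σ, τ.Nonempty → τ ∈ F.faces
    · exact ⟨σ, SComplex.mem_antifacets.mpr ⟨hσ, hσF, hmin⟩, subset_rfl⟩
    · push Not at hmin
      obtain ⟨ρ, hρσ, hρ, hρF⟩ := hmin
      obtain ⟨τ, hτ, hτρ⟩ := ih ρ hρσ hρ hρF
      exact ⟨τ, hτ, hτρ.trans hρσ.subset⟩

lemma SComplex.mem_faces_iff_all_subsets_iff (F : SComplex V) (P : Finset V → Prop) :
    (∀ σ, σ ∈ F.faces ↔ σ.Nonempty ∧ ∀ τ ⊆ σ, τ.Nonempty → P τ) ↔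
      (∀ σ ∈ F.faces, P σ) ∧ ∀ τ ∈ F.antifacets, ¬ P τ := by
  constructor
  · intro hF
    refine ⟨fun σ hσ => ((hF σ).mp hσ).2 σ subset_rfl (F.nonempty_mem σ hσ),
      fun τ hτ hPτ => ?_⟩
    obtain ⟨hτ, hτF, hmin⟩ := SComplex.mem_antifacets.mp hτ
    refine hτF ((hF τ).mpr ⟨hτ, fun ρ hρτ hρ => ?_⟩)
    rcases hρτ.ssubset_or_eq with hρτ | rfl
    · exact ((hF ρ).mp (hmin ρ hρτ hρ)).2 ρ subset_rfl hρ
    · exact hPτ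
  · rintro ⟨hfaces, hanti⟩ σ
    refine ⟨fun hσ => ⟨F.nonempty_mem σ hσ,
      fun τ hτσ hτ => hfaces τ (F.down_closed σ hσ τ hτσ hτ)⟩, fun ⟨hσ, hP⟩ => ?_⟩
    by_contra hσF
    obtain ⟨τ, hτ, hτσ⟩ := F.exists_antifacet_subset hσ hσF
    exact hanti τ hτ (hP τ hτσ (SComplex.mem_antifacets.mp hτ).1)

lemma SComplex.disjoint_faces_antifacets (F : SComplex V) : Disjoint F.faces F.antifacets :=
  Finset.disjoint_right.mpr fun _ hτ => (SComplex.mem_antifacets.mp hτ).2.1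

lemma Complexon.measurable_map_face (W : Complexon) {ι : Type*} (σ : Finset ι) :
    Measurable fun x : ι → ℝ => W.toFun (σ.val.map x) := by
  obtain hσ | ⟨d, hd⟩ : σ.card = 0 ∨ ∃ d, σ.card = d + 1 := by
    rcases σ.card with _ | d <;> simp
  · simp [Finset.card_eq_zero.mp hσ]
  · let e : Fin (d + 1) ≃ σ := (σ.equivFinOfCardEq hd).symm
    have hmap (x : ι → ℝ) :
        σ.val.map x = Multiset.map (fun i => x (e i)) Finset.univ.val := by
      rw [← Multiset.attach_map_val' σ.val x, ← Finset.attach_val, ← Finset.univ_eq_attach,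
        ← Finset.map_univ_equiv e, Finset.map_val, Multiset.map_map]
      rfl
    simp_rw [hmap]
    exact (W.measurable d).comp (measurable_pi_lambda _ fun i => measurable_pi_apply _)

lemma sampleFaces_eq_iff {n : ℕ} (F : SComplex (Fin n)) (W : Multiset ℝ → ℝ)
    (x : Fin n → ℝ) (u : Finset (Fin n) → ℝ) :
    sampleFaces W n x u = F.faces ↔
      (∀ σ ∈ F.faces, u σ ≤ W (σ.val.map x)) ∧
        ∀ τ ∈ F.antifacets, W (τ.val.map x) < u τ := by
  have hF := F.mem_faces_iff_all_subsets_iff fun τ => u τ ≤ W (τ.val.map x)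
  simp only [not_le] at hF
  rw [← hF, eq_comm, Finset.ext_iff]
  simp [sampleFaces]

lemma measurableSet_sampleFaces_eq {n : ℕ} (F : SComplex (Fin n)) (W : Complexon) :
    MeasurableSet {p : (Fin n → ℝ) × (Finset (Fin n) → ℝ) |
      sampleFaces W.toFun n p.1 p.2 = F.faces} := by
  simp only [sampleFaces_eq_iff, Set.ofPred_and, Set.ofPred_forall]
  exact .inter
    (Finset.measurableSet_biInter _ fun σ _ => measurableSet_le
      ((measurable_pi_apply σ).comp measurable_snd)
      ((W.measurable_map_face σ).comp measurable_fst))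
    (Finset.measurableSet_biInter _ fun τ _ => measurableSet_lt
      ((W.measurable_map_face τ).comp measurable_fst)
      ((measurable_pi_apply τ).comp measurable_snd))

lemma piUnif_sampleFaces_eq {n : ℕ} (F : SComplex (Fin n)) (W : Complexon) (x : Fin n → ℝ) :
    piUnif (Finset (Fin n)) {u | sampleFaces W.toFun n x u = F.faces} =
      ENNReal.ofReal ((∏ σ ∈ F.faces, W.toFun (σ.val.map x)) *
        ∏ τ ∈ F.antifacets, (1 - W.toFun (τ.val.map x))) := by
  simp only [sampleFaces_eq_iff]
  exact piUnif_setOf_le_and_lt F.disjoint_faces_antifacets fun σ => W.mem_Icc _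

lemma indDensity_eq_toReal_lintegral (F : SComplex V) (W : Complexon) :
    indDensity F W.toFun = (∫⁻ x, ENNReal.ofReal ((∏ σ ∈ F.faces, W.toFun (σ.val.map x)) *
      ∏ τ ∈ F.antifacets, (1 - W.toFun (τ.val.map x))) ∂piUnif V).toReal := by
  refine integral_eq_lintegral_of_nonneg_ae (.of_forall fun x => ?_)
    (Measurable.aestronglyMeasurable ?_)
  · exact mul_nonneg (Finset.prod_nonneg fun σ _ => (W.mem_Icc _).1)
      (Finset.prod_nonneg fun τ _ => sub_nonneg.mpr (W.mem_Icc _).2)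
  · exact (Finset.measurable_prod _ fun σ _ => W.measurable_map_face σ).mul
      (Finset.measurable_prod _ fun τ _ => measurable_const.sub (W.measurable_map_face τ))

/-- The induced homomorphism density is the sampling
probability: `t_ind(F,W) = Pr{𝕂(n,W) = F}`. -/
theorem indDensity_eq_sample_prob (n : ℕ) (F : SComplex (Fin n)) (W : Complexon) :
    indDensity F W.toFun =
      (((piUnif (Fin n)).prod (piUnif (Finset (Fin n))))
        {p | sampleFaces W.toFun n p.1 p.2 = F.faces}).toReal := by
  rw [indDensity_eq_toReal_lintegral, Measure.prod_apply (measurableSet_sampleFaces_eq F W)]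
  exact congrArg ENNReal.toReal (lintegral_congr fun x => (piUnif_sampleFaces_eq F W x).symm)
end
end
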